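/- arXiv:2504.06546 — 7 statements merged into one kernel-verified Lean document; each statement's English description precedes it below -/
import Mathlib

section
/- Let C4 be the linear code over F_{2^m} with generator matrix G4, where k is even with 4 ≤ k ≤ 2^m−4. Then the supports of the minimum weight (weight-k) codewords of the dual code C4^⊥ form a simple 3-(2^m, k, λ2^c) design, where λ2^c = λ2·k(k−1)(k−2)/((2^m−k)(2^m−k−1)(2^m−k−2)) and λ2 = ((2^m−k)(2^m−k−1)(2^m−k−2)/(2^m·k·(k−1)·(k−2)))·[ binom(2^m−3, k−3) + (−1)^{k/2}·(k−1)·binom(2^{m−1}−2, k/2−2) ]; equivalently λ2^c = (1/2^m)·[ binom(2^m−3, k−3) + (−1)^{k/2}·(k−1)·binom(2^{m−1}−2, k/2−2) ]. That is, every 3-element subset of the coordinate set {1, ..., 2^m} is contained in exactly λ2^c of the distinct supports of weight-k codewords of C4^⊥. -/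
open Finset

variable {F : Type*} [Field F] [Fintype F] [DecidableEq F]

/-- The linear code generated by the rows of the matrix `G`. -/
def rowSpan {k n : ℕ} (G : Matrix (Fin k) (Fin n) F) : Submodule F (Fin n → F) :=
  Submodule.span F (Set.range G)

/-- The Euclidean dual of the code `C`. -/
def dualCode {n : ℕ} (C : Submodule F (Fin n → F)) : Submodule F (Fin n → F) where
  carrier := {v | ∀ c ∈ C, ∑ i, c i * v i = 0}
  add_mem' := by
    intro a b ha hb c hc
    have h1 := ha c hc
    have h2 := hb c hc
    show ∑ i, c i * (a + b) i = 0
    simp only [Pi.add_apply, mul_add, Finset.sum_add_distrib, h1, h2, add_zero]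
  zero_mem' := by
    intro c hc
    show ∑ i, c i * (0 : Fin _ → F) i = 0
    simp
  smul_mem' := by
    intro r a ha c hc
    have h1 := ha c hc
    show ∑ i, c i * (r • a) i = 0
    calc ∑ i, c i * (r • a) i = r * ∑ i, c i * a i := by
          rw [Finset.mul_sum]
          exact Finset.sum_congr rfl fun i _ => by
            simp only [Pi.smul_apply, smul_eq_mul]
            ring
      _ = 0 := by rw [h1, mul_zero]

/-- The code `C` has minimum Hamming distance `d`. -/
def HasMinDist {n : ℕ} (C : Submodule F (Fin n → F)) (d : ℕ) : Prop :=
  (∃ c ∈ C, c ≠ 0 ∧ hammingNorm c = d) ∧ ∀ c ∈ C, c ≠ 0 → d ≤ hammingNorm c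

/-- The number of codewords of Hamming weight `w` in `C`. -/
noncomputable def numWt {n : ℕ} (C : Submodule F (Fin n → F)) (w : ℕ) : ℕ :=
  {c : Fin n → F | c ∈ C ∧ hammingNorm c = w}.ncard

/-- The supports of the codewords of weight `w` in `C`. -/
def blocks {n : ℕ} (C : Submodule F (Fin n → F)) (w : ℕ) : Set (Finset (Fin n)) :=
  {s | ∃ c ∈ C, hammingNorm c = w ∧ (Finset.univ.filter fun i => c i ≠ 0) = s}

/-- The generator matrix `G₄`: the `j`-th column (`j < 2^m - 1`) is
`(1, θⱼ, θⱼ², …, θⱼ^{k-2}, θⱼ^{k})ᵀ` (the power `θⱼ^{k-1}` is omitted), and the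
last column is `(1, 0, …, 0)ᵀ`. -/
def G4 (m k : ℕ) (θ : Fin (2 ^ m - 1) → F) : Matrix (Fin k) (Fin (2 ^ m)) F :=
  Matrix.of fun i j =>
    if h : (j : ℕ) < 2 ^ m - 1 then
      (if (i : ℕ) = k - 1 then θ ⟨j, h⟩ ^ k else θ ⟨j, h⟩ ^ (i : ℕ))
    else (if (i : ℕ) = 0 then 1 else 0)

open Polynomial

lemma coeff_basis (s : Finset F) {x : F} (hx : x ∈ s) (hinj : Set.InjOn id (s : Set F)) :
    (Lagrange.basis s id x).coeff (#s - 1) = Lagrange.nodalWeight s id x := by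
  have hb : Lagrange.basis s id x = C (Lagrange.nodalWeight s id x) *
      Lagrange.nodal (s.erase x) id := by
    rw [Lagrange.basis_eq_prod_sub_inv_mul_nodal_div hx, Lagrange.nodal_erase_eq_nodal_div hx]
  rw [hb, coeff_C_mul]
  have hmon : (Lagrange.nodal (s.erase x) id).Monic := Lagrange.nodal_monic
  have hdeg : (Lagrange.nodal (s.erase x) id).natDegree = #s - 1 := by
    rw [Lagrange.natDegree_nodal, card_erase_of_mem hx]
  rw [← hdeg, hmon.coeff_natDegree, mul_one]

lemma coeff_interpolate (s : Finset F) (hinj : Set.InjOn id (s : Set F)) (r : F → F) :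
    (Lagrange.interpolate s id r).coeff (#s - 1) =
      ∑ x ∈ s, r x * Lagrange.nodalWeight s id x := by
  rw [Lagrange.interpolate_apply, finset_sum_coeff]
  refine Finset.sum_congr rfl fun x hx => ?_
  rw [coeff_C_mul, coeff_basis s hx hinj]

lemma sum_eval_mul_weight (s : Finset F) (p : F[X]) (hdeg : p.degree < #s) :
    ∑ x ∈ s, p.eval x * Lagrange.nodalWeight s id x = p.coeff (#s - 1) := by
  have hinj : Set.InjOn id (s : Set F) := Function.injective_id.injOn
  conv_rhs => rw [Lagrange.eq_interpolate hinj hdeg]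
  rw [coeff_interpolate s hinj]
  rfl

lemma sum_pow_mul_weight_of_lt (s : Finset F) {e : ℕ} (he : e < #s - 1) :
    ∑ x ∈ s, x ^ e * Lagrange.nodalWeight s id x = 0 := by
  have h := sum_eval_mul_weight s (X ^ e) (by
    rw [degree_X_pow]
    exact_mod_cast lt_of_lt_of_le (Nat.lt_of_lt_of_le he (Nat.sub_le _ _)) le_rfl)
  simp only [eval_pow, eval_X] at h
  rw [h, coeff_X_pow, if_neg (by omega)]

lemma sum_pow_mul_weight_self (s : Finset F) (hs : 1 ≤ #s) :
    ∑ x ∈ s, x ^ (#s - 1) * Lagrange.nodalWeight s id x = 1 := by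
  have h := sum_eval_mul_weight s (X ^ (#s - 1)) (by
    rw [degree_X_pow]
    exact_mod_cast Nat.sub_lt hs one_pos)
  simp only [eval_pow, eval_X] at h
  rw [h, coeff_X_pow, if_pos rfl]

lemma sum_pow_mul_weight_top (s : Finset F) (hs : 1 ≤ #s) :
    ∑ x ∈ s, x ^ (#s) * Lagrange.nodalWeight s id x = ∑ x ∈ s, x := by
  have hnodal : (Lagrange.nodal s id).degree = #s := Lagrange.degree_nodal
  have hd : (X ^ (#s) - Lagrange.nodal s id).degree < (#s : WithBot ℕ) := by
    have := degree_sub_lt (p := (X:F[X]) ^ (#s)) (q := Lagrange.nodal s id)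
      (by rw [degree_X_pow, hnodal]) (pow_ne_zero _ X_ne_zero)
      (by rw [leadingCoeff_X_pow, Lagrange.nodal_monic])
    rwa [degree_X_pow] at this
  have h := sum_eval_mul_weight s (X ^ (#s) - Lagrange.nodal s id) hd
  have heval : ∀ x ∈ s, (X ^ (#s) - Lagrange.nodal s id).eval x = x ^ (#s) := by
    intro x hx
    have h0 : eval (id x) (Lagrange.nodal s id) = 0 := Lagrange.eval_nodal_at_node hx
    simp only [id] at h0
    rw [eval_sub, eval_pow, eval_X, h0, sub_zero]
  rw [Finset.sum_congr rfl fun x hx => by rw [← heval x hx]]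
  rw [h, coeff_sub, coeff_X_pow, if_neg (by omega)]
  have : (Lagrange.nodal s id).coeff (#s - 1) = -∑ x ∈ s, x := by
    have := prod_X_sub_C_coeff_card_pred s (id : F → F) hs
    simpa [Lagrange.nodal] using this
  rw [this, zero_sub, neg_neg]

lemma vandermonde_unique (s : Finset F) (d : F → F)
    (hd : ∀ e, e < #s - 1 → ∑ x ∈ s, d x * x ^ e = 0)
    {x₀ : F} (hx₀ : x₀ ∈ s) (hdx₀ : d x₀ = 0) : ∀ x ∈ s, d x = 0 := by
  classical
  set s' := s.erase x₀ with hs'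
  have hcard : #s' = #s - 1 := card_erase_of_mem hx₀
  set n := #s' with hn
  let ev : s' ≃ Fin n := s'.equivFin
  let v : Fin n → F := fun i => ((ev.symm i : s') : F)
  have hvinj : Function.Injective v := by
    intro i j hij
    exact ev.symm.injective (Subtype.ext hij)
  have hvmem : ∀ i, v i ∈ s' := fun i => (ev.symm i).2
  have hsum : ∀ f : F → F, ∑ i : Fin n, f (v i) = ∑ x ∈ s', f x := by
    intro f
    rw [← Finset.sum_coe_sort s' f]
    exact (Equiv.sum_comp ev.symm (fun x : s' => f x)).symm ▸ rfl
  have hzero : ∀ e : Fin n, ∑ x ∈ s', d x * x ^ (e : ℕ) = 0 := by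
    intro e
    have he : (e : ℕ) < #s - 1 := hcard ▸ e.2
    have := hd e he
    rw [← Finset.add_sum_erase s _ hx₀, hdx₀, zero_mul, zero_add] at this
    exact this
  let A : Matrix (Fin n) (Fin n) F := (Matrix.vandermonde v).transpose
  have hdet : A.det ≠ 0 := by
    rw [Matrix.det_transpose, Matrix.det_vandermonde]
    refine Finset.prod_ne_zero_iff.mpr fun i _ => Finset.prod_ne_zero_iff.mpr fun j hj => ?_
    rw [Finset.mem_Ioi] at hj
    exact sub_ne_zero_of_ne fun h => absurd (hvinj h) (Fin.ne_of_lt hj).symm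
  have hmv : A.mulVec (fun j => d (v j)) = 0 := by
    funext e
    have : A.mulVec (fun j => d (v j)) e = ∑ j : Fin n, d (v j) * (v j) ^ (e : ℕ) := by
      simp only [Matrix.mulVec, dotProduct, A, Matrix.transpose_apply,
        Matrix.vandermonde]
      exact Finset.sum_congr rfl fun j _ => mul_comm _ _
    rw [this, hsum (fun x => d x * x ^ (e : ℕ)), hzero e]
    rfl
  have hdz := Matrix.eq_zero_of_mulVec_eq_zero hdet hmv
  intro x hx
  rcases eq_or_ne x x₀ with rfl | hne
  · exact hdx₀
  · have hx' : x ∈ s' := Finset.mem_erase.mpr ⟨hne, hx⟩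
    have : x = v (ev ⟨x, hx'⟩) := by simp [v]
    rw [this]
    exact congrFun hdz (ev ⟨x, hx'⟩)

lemma weight_ne_zero (T : Finset F) {x : F} (hx : x ∈ T) :
    Lagrange.nodalWeight T id x ≠ 0 :=
  Lagrange.nodalWeight_ne_zero Function.injective_id.injOn hx

lemma key_support (T : Finset F) (k : ℕ) (hk : 2 ≤ k) (hT : #T = k) (d : F → F)
    (hne : ∀ x ∈ T, d x ≠ 0)
    (hlow : ∀ e, e < k - 1 → ∑ x ∈ T, d x * x ^ e = 0)
    (htop : ∑ x ∈ T, d x * x ^ k = 0) : ∑ x ∈ T, x = 0 := by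
  have hTne : T.Nonempty := by
    rw [← Finset.card_pos, hT]; omega
  obtain ⟨x₀, hx₀⟩ := hTne
  set w : F → F := Lagrange.nodalWeight T id with hw
  set lam : F := d x₀ * (w x₀)⁻¹ with hlam
  have hlamne : lam ≠ 0 := mul_ne_zero (hne x₀ hx₀) (inv_ne_zero (weight_ne_zero T hx₀))
  have hzero : ∀ x ∈ T, d x - lam * w x = 0 := by
    apply vandermonde_unique T (fun x => d x - lam * w x)
    · intro e he
      rw [hT] at he
      have h1 := hlow e he
      have h2 : ∑ x ∈ T, x ^ e * w x = 0 := by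
        apply sum_pow_mul_weight_of_lt
        rw [hT]; exact he
      have : ∑ x ∈ T, (d x - lam * w x) * x ^ e
          = ∑ x ∈ T, d x * x ^ e - lam * ∑ x ∈ T, x ^ e * w x := by
        rw [Finset.mul_sum, ← Finset.sum_sub_distrib]
        exact Finset.sum_congr rfl fun x _ => by ring
      rw [this, h1, h2, mul_zero, sub_zero]
    · exact hx₀
    · rw [hlam, mul_assoc, inv_mul_cancel₀ (weight_ne_zero T hx₀), mul_one, sub_self]
  have hd_eq : ∀ x ∈ T, d x = lam * w x := fun x hx => by
    have := hzero x hx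
    linear_combination this
  have htop' : ∑ x ∈ T, d x * x ^ k = lam * ∑ x ∈ T, x ^ k * w x := by
    rw [Finset.mul_sum]
    exact Finset.sum_congr rfl fun x hx => by rw [hd_eq x hx]; ring
  have hw_top : ∑ x ∈ T, x ^ k * w x = ∑ x ∈ T, x := by
    have := sum_pow_mul_weight_top T (by omega : 1 ≤ #T)
    rwa [hT] at this
  rw [htop', hw_top] at htop
  exact (mul_eq_zero.mp htop).resolve_left hlamne

lemma mem_dualCode_iff {k n : ℕ} (G : Matrix (Fin k) (Fin n) F) (v : Fin n → F) :
    v ∈ dualCode (rowSpan G) ↔ ∀ i, ∑ j, G i j * v j = 0 := by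
  have hmem : v ∈ dualCode (rowSpan G) ↔ ∀ c ∈ rowSpan G, ∑ i, c i * v i = 0 := Iff.rfl
  rw [hmem]
  constructor
  · intro h i
    exact h (G i) (Submodule.subset_span ⟨i, rfl⟩)
  · intro h c hc
    let φ : (Fin n → F) →ₗ[F] F :=
      { toFun := fun c => ∑ i, c i * v i
        map_add' := fun a b => by
          simp only [Pi.add_apply, add_mul, Finset.sum_add_distrib]
        map_smul' := fun r a => by
          simp only [Pi.smul_apply, smul_eq_mul, RingHom.id_apply, Finset.mul_sum, mul_assoc] }
    have hker : rowSpan G ≤ LinearMap.ker φ := by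
      rw [rowSpan, Submodule.span_le]
      rintro _ ⟨i, rfl⟩
      exact h i
    exact hker hc

/-- The evaluation-point map: coordinate `j` corresponds to `θ j` for `j < 2^m - 1`,
and to `0` for the last coordinate. -/
def pt (m : ℕ) (θ : Fin (2 ^ m - 1) → F) (j : Fin (2 ^ m)) : F :=
  if h : (j : ℕ) < 2 ^ m - 1 then θ ⟨j, h⟩ else 0

lemma pt_injective {m : ℕ} {θ : Fin (2 ^ m - 1) → F} (hθinj : Function.Injective θ)
    (hθne : ∀ j, θ j ≠ 0) : Function.Injective (pt m θ) := by
  intro a b hab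
  unfold pt at hab
  split_ifs at hab with h1 h2 h2
  · have := hθinj hab
    exact Fin.ext (by simpa using congrArg Fin.val this)
  · exact absurd hab (hθne _)
  · exact absurd hab.symm (hθne _)
  · have ha := a.2; have hb := b.2
    exact Fin.ext (by omega)

lemma G4_apply {m k : ℕ} (hk : 4 ≤ k) (θ : Fin (2 ^ m - 1) → F) (i : Fin k) (j : Fin (2 ^ m)) :
    G4 m k θ i j = if (i : ℕ) = k - 1 then pt m θ j ^ k else pt m θ j ^ (i : ℕ) := by
  unfold G4 pt
  rw [Matrix.of_apply]
  by_cases h1 : (j : ℕ) < 2 ^ m - 1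
  · rw [dif_pos h1, dif_pos h1]
  · rw [dif_neg h1, dif_neg h1]
    by_cases h2 : (i : ℕ) = k - 1
    · rw [if_pos h2, if_neg (by omega), zero_pow (by omega)]
    · rw [if_neg h2]
      by_cases h0 : (i : ℕ) = 0
      · rw [if_pos h0, h0, pow_zero]
      · rw [if_neg h0, zero_pow h0]

lemma blocks_eq {m k : ℕ} (hk : 4 ≤ k) (hcard : Fintype.card F = 2 ^ m)
    (θ : Fin (2 ^ m - 1) → F) (hθinj : Function.Injective θ) (hθne : ∀ j, θ j ≠ 0) :
    blocks (dualCode (rowSpan (G4 m k θ))) k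
      = {S : Finset (Fin (2 ^ m)) | #S = k ∧ ∑ j ∈ S, pt m θ j = 0} := by
  have hptinj : Function.Injective (pt m θ) := pt_injective hθinj hθne
  ext S
  simp only [blocks, Set.mem_setOf_eq]
  constructor
  · rintro ⟨c, hcmem, hcnorm, hcsupp⟩
    have hsupp_mem : ∀ j, j ∈ S ↔ c j ≠ 0 := by
      intro j
      rw [← hcsupp, Finset.mem_filter]
      simp
    have hScard : #S = k := by
      rw [← hcsupp, ← hcnorm]
      rfl
    have hrows := (mem_dualCode_iff (G4 m k θ) c).mp hcmem
    have hrow : ∀ i : Fin k,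
        ∑ j ∈ S, (if (i : ℕ) = k - 1 then pt m θ j ^ k else pt m θ j ^ (i : ℕ)) * c j = 0 := by
      intro i
      have := hrows i
      rw [Finset.sum_congr rfl (fun j _ => by rw [G4_apply hk θ i j])] at this
      rw [← this]
      apply Finset.sum_subset (Finset.subset_univ S)
      intro j _ hj
      have : c j = 0 := by
        by_contra hc
        exact hj ((hsupp_mem j).mpr hc)
      rw [this, mul_zero]
    set T : Finset F := S.image (pt m θ) with hT
    have htrans : ∀ g : F → F, ∑ x ∈ T, g x = ∑ j ∈ S, g (pt m θ j) := fun g =>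
      Finset.sum_image (fun a _ b _ h => hptinj h)
    have htransid : ∑ x ∈ T, x = ∑ j ∈ S, pt m θ j :=
      Finset.sum_image (fun a _ b _ h => hptinj h)
    have hTcard : #T = k := by
      rw [hT, Finset.card_image_of_injective S hptinj, hScard]
    have hptE : Function.Bijective (pt m θ) := by
      rw [Fintype.bijective_iff_injective_and_card]
      exact ⟨hptinj, by simp [hcard]⟩
    let ptE : Fin (2 ^ m) ≃ F := Equiv.ofBijective (pt m θ) hptE
    set d : F → F := fun x => c (ptE.symm x) with hd
    have hd_pt : ∀ j, d (pt m θ j) = c j := by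
      intro j
      show c (ptE.symm (ptE j)) = c j
      rw [Equiv.symm_apply_apply]
    have htransd : ∀ e : ℕ, ∑ x ∈ T, d x * x ^ e = ∑ j ∈ S, c j * pt m θ j ^ e := by
      intro e
      rw [htrans (fun x => d x * x ^ e)]
      exact Finset.sum_congr rfl fun j _ => by rw [hd_pt j]
    refine ⟨hScard, ?_⟩
    have hkey := key_support T k (by omega) hTcard d ?_ ?_ ?_
    · rw [htransid] at hkey
      exact hkey
    · intro x hx
      obtain ⟨j, hj, rfl⟩ := Finset.mem_image.mp hx
      rw [hd_pt j]
      exact (hsupp_mem j).mp hj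
    · intro e he
      rw [htransd e]
      have := hrow ⟨e, by omega⟩
      rw [Finset.sum_congr rfl (fun j _ => by
        rw [if_neg (by simp only []; omega)])] at this
      rw [← this]
      exact Finset.sum_congr rfl fun j _ => mul_comm _ _
    · rw [htransd k]
      have := hrow ⟨k - 1, by omega⟩
      rw [Finset.sum_congr rfl (fun j _ => by rw [if_pos (by simp only [])])] at this
      rw [← this]
      exact Finset.sum_congr rfl fun j _ => mul_comm _ _
  · rintro ⟨hScard, hSsum⟩
    set T : Finset F := S.image (pt m θ) with hT
    have htrans : ∀ g : F → F, ∑ x ∈ T, g x = ∑ j ∈ S, g (pt m θ j) := fun g =>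
      Finset.sum_image (fun a _ b _ h => hptinj h)
    have htransid : ∑ x ∈ T, x = ∑ j ∈ S, pt m θ j :=
      Finset.sum_image (fun a _ b _ h => hptinj h)
    have hTcard : #T = k := by
      rw [hT, Finset.card_image_of_injective S hptinj, hScard]
    have hTsum : ∑ x ∈ T, x = 0 := by
      rw [htransid]
      exact hSsum
    set c : Fin (2 ^ m) → F := fun j =>
      if j ∈ S then Lagrange.nodalWeight T id (pt m θ j) else 0 with hc
    have hcval : ∀ j ∈ S, c j = Lagrange.nodalWeight T id (pt m θ j) := by
      intro j hj
      rw [hc]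
      simp [hj]
    have hcne : ∀ j, c j ≠ 0 ↔ j ∈ S := by
      intro j
      constructor
      · intro h
        by_contra hj
        apply h
        rw [hc]
        simp [hj]
      · intro hj
        rw [hcval j hj]
        exact weight_ne_zero T (Finset.mem_image_of_mem _ hj)
    refine ⟨c, ?_, ?_, ?_⟩
    · rw [mem_dualCode_iff]
      intro i
      have hzero : ∑ j ∈ Finset.univ, G4 m k θ i j * c j = ∑ j ∈ S, G4 m k θ i j * c j := by
        symm
        apply Finset.sum_subset (Finset.subset_univ S)
        intro j _ hj
        have : c j = 0 := by
          by_contra hcc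
          exact hj ((hcne j).mp hcc)
        rw [this, mul_zero]
      rw [hzero]
      rw [Finset.sum_congr rfl (fun j hj => by
        rw [G4_apply hk θ i j, hcval j hj])]
      by_cases hik : (i : ℕ) = k - 1
      · rw [Finset.sum_congr rfl (fun j hj => by rw [if_pos hik])]
        have := sum_pow_mul_weight_top T (by omega : 1 ≤ #T)
        rw [hTcard, htrans (fun x => x ^ k * Lagrange.nodalWeight T id x), htransid] at this
        rw [this, hSsum]
      · rw [Finset.sum_congr rfl (fun j hj => by rw [if_neg hik])]
        have hilt : (i : ℕ) < #T - 1 := by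
          have := i.2
          omega
        have := sum_pow_mul_weight_of_lt T hilt
        rw [htrans (fun x => x ^ (i : ℕ) * Lagrange.nodalWeight T id x)] at this
        exact this
    · show hammingNorm c = k
      have : hammingNorm c = #(Finset.univ.filter fun j => c j ≠ 0) := rfl
      rw [this]
      have : (Finset.univ.filter fun j => c j ≠ 0) = S := by
        ext j
        simp [hcne j]
      rw [this, hScard]
    · ext j
      simp [hcne j]
/-- The sign character `ZMod 2 → ℚ`. -/
def eps (s : ZMod 2) : ℚ := if s = 0 then 1 else -1

lemma zmod2_cases : ∀ s : ZMod 2, s = 0 ∨ s = 1 := by decide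

lemma eps_zero : eps 0 = 1 := rfl

lemma eps_one : eps 1 = -1 := rfl

lemma eps_add (s t : ZMod 2) : eps (s + t) = eps s * eps t := by
  rcases zmod2_cases s with rfl | rfl <;> rcases zmod2_cases t with rfl | rfl <;>
    norm_num [eps] <;> decide

lemma eps_sum {α : Type*} [DecidableEq α] (s : Finset α) (v : α → ZMod 2) :
    eps (∑ x ∈ s, v x) = ∏ x ∈ s, eps (v x) := by
  induction s using Finset.cons_induction with
  | empty => simp [eps]
  | cons a s ha ih => rw [Finset.sum_cons, Finset.prod_cons, eps_add, ih]

lemma eps_indicator (s t : ZMod 2) :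
    (1 + eps s) * (1 + eps t) = if s = 0 ∧ t = 0 then 4 else 0 := by
  rcases zmod2_cases s with rfl | rfl <;> rcases zmod2_cases t with rfl | rfl <;>
    norm_num [eps] <;> decide

/-- Coefficients of `(X² - 1)^a` over `ℚ`. -/
lemma coeff_sq_sub_one_pow (a r : ℕ) :
    (((X : ℚ[X]) ^ 2 - 1) ^ a).coeff r =
      if Even r then (-1 : ℚ) ^ (a - r / 2) * ((a.choose (r / 2) : ℚ)) else 0 := by
  have hexp : ((X : ℚ[X]) ^ 2 - 1) ^ a
      = ∑ i ∈ Finset.range (a + 1), C ((-1 : ℚ) ^ (a - i) * (a.choose i : ℚ)) * X ^ (2 * i) := by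
    have : ((X : ℚ[X]) ^ 2 - 1) ^ a = ((X : ℚ[X]) ^ 2 + C (-1)) ^ a := by
      rw [map_neg, map_one]; ring
    rw [this, add_pow]
    refine Finset.sum_congr rfl fun i hi => ?_
    rw [← pow_mul, ← C_pow, map_mul, map_pow, map_neg, map_one, C_eq_natCast]
    ring
  rw [hexp, finset_sum_coeff]
  have hterm : ∀ i ∈ Finset.range (a + 1),
      (C ((-1 : ℚ) ^ (a - i) * (a.choose i : ℚ)) * X ^ (2 * i)).coeff r
        = if r = 2 * i then (-1 : ℚ) ^ (a - i) * (a.choose i : ℚ) else 0 := by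
    intro i _
    rw [coeff_C_mul, coeff_X_pow]
    split_ifs <;> simp
  rw [Finset.sum_congr rfl hterm]
  by_cases hev : Even r
  · obtain ⟨u, hu⟩ := hev
    have hr2 : r / 2 = u := by omega
    rw [if_pos ⟨u, hu⟩, hr2]
    by_cases hua : u ≤ a
    · rw [Finset.sum_eq_single u]
      · rw [if_pos (by omega)]
      · intro b _ hb
        rw [if_neg (by omega)]
      · intro h
        exact absurd (Finset.mem_range.mpr (by omega)) h
    · rw [Finset.sum_eq_zero, Nat.choose_eq_zero_of_lt (by omega)]
      · simp
      · intro b hb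
        rw [Finset.mem_range] at hb
        rw [if_neg (by omega)]
  · rw [if_neg hev, Finset.sum_eq_zero]
    intro b _
    rw [if_neg (fun h => hev ⟨b, by omega⟩)]

lemma coeff_mul_X_add_one (p : ℚ[X]) (r : ℕ) (hr : 1 ≤ r) :
    (p * (X + 1)).coeff r = p.coeff (r - 1) + p.coeff r := by
  obtain ⟨s, rfl⟩ : ∃ s, r = s + 1 := ⟨r - 1, by omega⟩
  rw [mul_add, mul_one, coeff_add, coeff_mul_X]
  simp

lemma coeff_mul_X_sub_one (p : ℚ[X]) (r : ℕ) (hr : 1 ≤ r) :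
    (p * (X - 1)).coeff r = p.coeff (r - 1) - p.coeff r := by
  obtain ⟨s, rfl⟩ : ∃ s, r = s + 1 := ⟨r - 1, by omega⟩
  rw [mul_sub, mul_one, coeff_sub, coeff_mul_X]
  simp

lemma odd_coeff_sq_sub_one_pow (a t : ℕ) (ht : ¬ Even t) :
    (((X : ℚ[X]) ^ 2 - 1) ^ a).coeff t = 0 := by
  rw [coeff_sq_sub_one_pow, if_neg ht]

lemma sign_mid (h u d : ℕ) (hud : u + d = h - 2) (hh : 2 ≤ h) (hu : u ≤ h - 2) :
    (((X : ℚ[X]) ^ 2 - 1) ^ (h - 2)).coeff (2 * u)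
      = (-1 : ℚ) ^ d * (((h - 2).choose u : ℚ)) := by
  rw [coeff_sq_sub_one_pow, if_pos ⟨u, by ring⟩]
  have h2 : 2 * u / 2 = u := by omega
  have h3 : h - 2 - u = d := by omega
  rw [h2, h3]

lemma sign_high (h u d : ℕ) (hud : u + d = h - 2) (hh : 3 ≤ h) :
    (((X : ℚ[X]) ^ 2 - 1) ^ (h - 3)).coeff (2 * u)
      = -((-1 : ℚ) ^ d * (((h - 3).choose u : ℚ))) := by
  rw [coeff_sq_sub_one_pow, if_pos ⟨u, by ring⟩]
  have h2 : 2 * u / 2 = u := by omega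
  rw [h2]
  rcases Nat.eq_zero_or_pos d with hd | hd
  · have : h - 3 < u := by omega
    rw [Nat.choose_eq_zero_of_lt this]
    simp
  · have h3 : h - 3 - u = d - 1 := by omega
    have h4 : (-1 : ℚ) ^ d = -(-1 : ℚ) ^ (d - 1) := by
      conv_lhs => rw [show d = (d - 1) + 1 from by omega]
      rw [pow_succ]
      ring
    rw [h3, h4]
    ring

lemma sign_high' (h u d : ℕ) (hud : u + d = h - 2) (hh : 3 ≤ h) (hu : 1 ≤ u) :
    (((X : ℚ[X]) ^ 2 - 1) ^ (h - 3)).coeff (2 * u - 2)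
      = (-1 : ℚ) ^ d * (((h - 3).choose (u - 1) : ℚ)) := by
  have he : 2 * u - 2 = 2 * (u - 1) := by omega
  rw [he, coeff_sq_sub_one_pow, if_pos ⟨u - 1, by ring⟩]
  have h2 : 2 * (u - 1) / 2 = u - 1 := by omega
  have h3 : h - 3 - (u - 1) = d := by omega
  rw [h2, h3]

lemma val_z1 (h u d : ℕ) (hud : u + d = h - 2) (hh : 2 ≤ h) (hu : 1 ≤ u) (hu' : u ≤ h - 2) :
    ((((X : ℚ[X]) ^ 2 - 1) ^ (h - 2)) * (X + 1)).coeff (2 * u)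
      = (-1 : ℚ) ^ d * (((h - 2).choose u : ℚ)) := by
  rw [coeff_mul_X_add_one _ _ (by omega), odd_coeff_sq_sub_one_pow _ _ (by
    rintro ⟨t, ht⟩; omega), sign_mid h u d hud hh hu', zero_add]

lemma val_z2 (h u d : ℕ) (hud : u + d = h - 2) (hh : 2 ≤ h) (hu : 1 ≤ u) (hu' : u ≤ h - 2) :
    ((((X : ℚ[X]) ^ 2 - 1) ^ (h - 2)) * (X - 1)).coeff (2 * u)
      = -((-1 : ℚ) ^ d * (((h - 2).choose u : ℚ))) := by
  rw [coeff_mul_X_sub_one _ _ (by omega), odd_coeff_sq_sub_one_pow _ _ (by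
    rintro ⟨t, ht⟩; omega), sign_mid h u d hud hh hu', zero_sub]

lemma val_z3 (h u d : ℕ) (hud : u + d = h - 2) (hh : 3 ≤ h) (hu : 2 ≤ u) :
    ((((X : ℚ[X]) ^ 2 - 1) ^ (h - 3)) * (X - 1) ^ 3).coeff (2 * u)
      = (-1 : ℚ) ^ d *
          (((h - 3).choose u : ℚ) - 3 * ((h - 3).choose (u - 1) : ℚ)) := by
  set p : ℚ[X] := ((X : ℚ[X]) ^ 2 - 1) ^ (h - 3) with hp
  have c1 : ∀ t, 1 ≤ t → (p * (X - 1)).coeff t = p.coeff (t - 1) - p.coeff t :=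
    fun t ht => coeff_mul_X_sub_one p t ht
  have c2 : ∀ t, 2 ≤ t → ((p * (X - 1)) * (X - 1)).coeff t
      = p.coeff (t - 2) - 2 * p.coeff (t - 1) + p.coeff t := by
    intro t ht
    rw [coeff_mul_X_sub_one _ _ (by omega), c1 _ (by omega), c1 _ (by omega)]
    have : t - 1 - 1 = t - 2 := by omega
    rw [this]
    ring
  have hsplit : p * (X - 1) ^ 3 = ((p * (X - 1)) * (X - 1)) * (X - 1) := by ring
  rw [hsplit, coeff_mul_X_sub_one _ _ (by omega), c2 _ (by omega), c2 _ (by omega)]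
  have e1 : 2 * u - 1 - 2 = 2 * u - 3 := by omega
  have e2 : 2 * u - 1 - 1 = 2 * u - 2 := by omega
  have e3 : 2 * u - 2 + 1 = 2 * u - 1 := by omega
  rw [e1, e2]
  rw [odd_coeff_sq_sub_one_pow (h - 3) (2 * u - 3) (by rintro ⟨t, ht⟩; omega),
    odd_coeff_sq_sub_one_pow (h - 3) (2 * u - 1) (by rintro ⟨t, ht⟩; omega),
    sign_high' h u d hud hh (by omega), sign_high h u d hud hh]
  ring

lemma val_z0 (h u d : ℕ) (hud : u + d = h - 2) (hh : 3 ≤ h) (hu : 2 ≤ u) :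
    ((((X : ℚ[X]) ^ 2 - 1) ^ (h - 3)) * (X + 1) ^ 3).coeff (2 * u)
      = -((-1 : ℚ) ^ d *
          (((h - 3).choose u : ℚ) - 3 * ((h - 3).choose (u - 1) : ℚ))) := by
  set p : ℚ[X] := ((X : ℚ[X]) ^ 2 - 1) ^ (h - 3) with hp
  have c1 : ∀ t, 1 ≤ t → (p * (X + 1)).coeff t = p.coeff (t - 1) + p.coeff t :=
    fun t ht => coeff_mul_X_add_one p t ht
  have c2 : ∀ t, 2 ≤ t → ((p * (X + 1)) * (X + 1)).coeff t
      = p.coeff (t - 2) + 2 * p.coeff (t - 1) + p.coeff t := by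
    intro t ht
    rw [coeff_mul_X_add_one _ _ (by omega), c1 _ (by omega), c1 _ (by omega)]
    have : t - 1 - 1 = t - 2 := by omega
    rw [this]
    ring
  have hsplit : p * (X + 1) ^ 3 = ((p * (X + 1)) * (X + 1)) * (X + 1) := by ring
  rw [hsplit, coeff_mul_X_add_one _ _ (by omega), c2 _ (by omega), c2 _ (by omega)]
  have e1 : 2 * u - 1 - 2 = 2 * u - 3 := by omega
  have e2 : 2 * u - 1 - 1 = 2 * u - 2 := by omega
  rw [e1, e2]
  rw [odd_coeff_sq_sub_one_pow (h - 3) (2 * u - 3) (by rintro ⟨t, ht⟩; omega),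
    odd_coeff_sq_sub_one_pow (h - 3) (2 * u - 1) (by rintro ⟨t, ht⟩; omega),
    sign_high' h u d hud hh (by omega), sign_high h u d hud hh]
  ring

section DualSums

variable {F : Type*} [Field F] [Fintype F] [DecidableEq F] [Module (ZMod 2) F]
  [Fintype (Module.Dual (ZMod 2) F)]

lemma zmod2_eq_one {v : ZMod 2} (h : v ≠ 0) : v = 1 := (zmod2_cases v).resolve_left h

lemma eps_of_ne {v : ZMod 2} (h : v ≠ 0) : eps v = -1 := by rw [zmod2_eq_one h]; rfl

lemma sum_eps_eval (φ : Module.Dual (ZMod 2) F) (hφ : φ ≠ 0) :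
    ∑ x : F, eps (φ x) = 0 := by
  obtain ⟨x₁, hx₁⟩ : ∃ x, φ x ≠ 0 := by
    by_contra h
    push_neg at h
    exact hφ (LinearMap.ext fun x => h x)
  have h1 : φ x₁ = 1 := zmod2_eq_one hx₁
  have hre : ∑ x : F, eps (φ (x + x₁)) = ∑ x : F, eps (φ x) :=
    Equiv.sum_comp (Equiv.addRight x₁) (fun y => eps (φ y))
  have hpt : ∀ x : F, eps (φ (x + x₁)) = -eps (φ x) := by
    intro x
    rw [map_add, h1, eps_add, eps_one]
    ring
  rw [Finset.sum_congr rfl fun x _ => hpt x, Finset.sum_neg_distrib] at hre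
  linarith

lemma card_ker_eval (φ : Module.Dual (ZMod 2) F) (hφ : φ ≠ 0) :
    2 * #(univ.filter fun x : F => φ x = 0) = Fintype.card F := by
  have hz := sum_eps_eval φ hφ
  rw [← Finset.sum_filter_add_sum_filter_not univ (fun x => φ x = 0)] at hz
  have h1 : ∑ x ∈ univ.filter fun x : F => φ x = 0, eps (φ x)
      = #(univ.filter fun x : F => φ x = 0) := by
    rw [Finset.sum_congr rfl fun x hx => by
      rw [(Finset.mem_filter.mp hx).2, eps_zero]]
    simp
  have h2 : ∑ x ∈ univ.filter fun x : F => ¬ φ x = 0, eps (φ x)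
      = -#(univ.filter fun x : F => ¬ φ x = 0) := by
    rw [Finset.sum_congr rfl fun x hx => eps_of_ne (Finset.mem_filter.mp hx).2]
    simp [Finset.sum_const]
  rw [h1, h2] at hz
  have hcards := Finset.card_filter_add_card_filter_not
    (s := (univ : Finset F)) (p := fun x => φ x = 0)
  have : (#(univ.filter fun x : F => φ x = 0) : ℚ)
      = #(univ.filter fun x : F => ¬ φ x = 0) := by linarith
  have hQ : #(univ.filter fun x : F => φ x = 0)
      = #(univ.filter fun x : F => ¬ φ x = 0) := by exact_mod_cast this
  simp only [Finset.card_univ] at hcards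
  omega

lemma sum_eps_dual (g : F) (hg : g ≠ 0) :
    ∑ φ : Module.Dual (ZMod 2) F, eps (φ g) = 0 := by
  obtain ⟨φ₀, hφ₀⟩ : ∃ φ : Module.Dual (ZMod 2) F, φ g ≠ 0 := by
    by_contra h
    push_neg at h
    exact hg ((Module.forall_dual_apply_eq_zero_iff (ZMod 2) g).mp h)
  have h1 : φ₀ g = 1 := zmod2_eq_one hφ₀
  have hre : ∑ φ : Module.Dual (ZMod 2) F, eps ((φ + φ₀) g)
      = ∑ φ : Module.Dual (ZMod 2) F, eps (φ g) :=
    Equiv.sum_comp (Equiv.addRight φ₀) (fun ψ => eps (ψ g))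
  have hpt : ∀ φ : Module.Dual (ZMod 2) F, eps ((φ + φ₀) g) = -eps (φ g) := by
    intro φ
    rw [LinearMap.add_apply, h1, eps_add, eps_one]
    ring
  rw [Finset.sum_congr rfl fun φ _ => hpt φ, Finset.sum_neg_distrib] at hre
  linarith

lemma card_allEq (u v : F) (hu : u ≠ 0) (hv : v ≠ 0) (huv : u + v ≠ 0) :
    (4 : ℚ) * #(univ.filter fun φ : Module.Dual (ZMod 2) F => φ u = 0 ∧ φ v = 0)
      = Fintype.card (Module.Dual (ZMod 2) F) := by
  have hpt : ∀ φ : Module.Dual (ZMod 2) F,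
      (1 + eps (φ u)) * (1 + eps (φ v))
        = 1 + eps (φ u) + eps (φ v) + eps (φ (u + v)) := by
    intro φ
    rw [map_add, eps_add]
    ring
  have hsum : ∑ φ : Module.Dual (ZMod 2) F, (1 + eps (φ u)) * (1 + eps (φ v))
      = Fintype.card (Module.Dual (ZMod 2) F) := by
    rw [Finset.sum_congr rfl fun φ _ => hpt φ]
    rw [Finset.sum_add_distrib, Finset.sum_add_distrib, Finset.sum_add_distrib,
      sum_eps_dual u hu, sum_eps_dual v hv, sum_eps_dual (u + v) huv]
    simp
  have hsum2 : ∑ φ : Module.Dual (ZMod 2) F, (1 + eps (φ u)) * (1 + eps (φ v))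
      = (4 : ℚ) * #(univ.filter fun φ : Module.Dual (ZMod 2) F => φ u = 0 ∧ φ v = 0) := by
    rw [Finset.sum_congr rfl fun φ _ => eps_indicator (φ u) (φ v)]
    rw [Finset.sum_ite, Finset.sum_const, Finset.sum_const]
    simp [mul_comm]
  rw [← hsum2, hsum]

end DualSums

lemma coeff_case (h u d z : ℕ) (hz : z ≤ 3) (hud : u + d = h - 2) (hh : 4 ≤ h) (hu : 2 ≤ u) :
    (-1 : ℚ) ^ (3 - z) * ((((X : ℚ[X]) + 1) ^ (h - z) * (X - 1) ^ (h - 3 + z)).coeff (2 * u))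
      = if z = 0 ∨ z = 3
        then (-1 : ℚ) ^ d * (((h - 3).choose u : ℚ) - 3 * ((h - 3).choose (u - 1) : ℚ))
        else (-1 : ℚ) ^ d * (((h - 2).choose u : ℚ)) := by
  have hu' : u ≤ h - 2 := by omega
  have hbase : ((X : ℚ[X]) + 1) * (X - 1) = X ^ 2 - 1 := by ring
  interval_cases z
  · have hsp : ((X : ℚ[X]) + 1) ^ (h - 0) * (X - 1) ^ (h - 3 + 0)
        = (((X : ℚ[X]) ^ 2 - 1) ^ (h - 3)) * (X + 1) ^ 3 := by
      have h1 : ((X : ℚ[X]) + 1) ^ (h - 0) = (X + 1) ^ (h - 3) * (X + 1) ^ 3 := by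
        rw [← pow_add]
        congr 1
        omega
      rw [h1, add_zero, ← hbase, mul_pow]
      ring
    rw [hsp, val_z0 h u d hud (by omega) hu]
    norm_num
  · have hsp : ((X : ℚ[X]) + 1) ^ (h - 1) * (X - 1) ^ (h - 3 + 1)
        = (((X : ℚ[X]) ^ 2 - 1) ^ (h - 2)) * (X + 1) := by
      have h1 : ((X : ℚ[X]) + 1) ^ (h - 1) = (X + 1) ^ (h - 2) * (X + 1) ^ 1 := by
        rw [← pow_add]
        congr 1
        omega
      have h2 : h - 3 + 1 = h - 2 := by omega
      rw [h1, h2, ← hbase, mul_pow]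
      ring
    rw [hsp, val_z1 h u d hud (by omega) (by omega) hu']
    norm_num
  · have hsp : ((X : ℚ[X]) + 1) ^ (h - 2) * (X - 1) ^ (h - 3 + 2)
        = (((X : ℚ[X]) ^ 2 - 1) ^ (h - 2)) * (X - 1) := by
      have h1 : ((X : ℚ[X]) - 1) ^ (h - 3 + 2) = (X - 1) ^ (h - 2) * (X - 1) ^ 1 := by
        rw [← pow_add]
        congr 1
        omega
      rw [h1, ← hbase, mul_pow]
      ring
    rw [hsp, val_z2 h u d hud (by omega) (by omega) hu']
    norm_num
  · have hsp : ((X : ℚ[X]) + 1) ^ (h - 3) * (X - 1) ^ (h - 3 + 3)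
        = (((X : ℚ[X]) ^ 2 - 1) ^ (h - 3)) * (X - 1) ^ 3 := by
      have h1 : ((X : ℚ[X]) - 1) ^ (h - 3 + 3) = (X - 1) ^ (h - 3) * (X - 1) ^ 3 := by
        rw [← pow_add]
      rw [h1, ← hbase, mul_pow]
      ring
    rw [hsp, val_z3 h u d hud (by omega) hu]
    norm_num

lemma card_filter_triple {α : Type*} [DecidableEq α] {a b c : α} (hab : a ≠ b) (hac : a ≠ c)
    (hbc : b ≠ c) (p : α → Prop) [DecidablePred p] :
    #(({a, b, c} : Finset α).filter p)
      = (if p a then 1 else 0) + (if p b then 1 else 0) + (if p c then 1 else 0) := by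
  rw [Finset.card_filter, Finset.sum_insert (by simp [hab, hac]),
    Finset.sum_insert (by simp [hbc]), Finset.sum_singleton, add_assoc]

theorem count_main {F : Type*} [Field F] [Fintype F] [DecidableEq F] [Module (ZMod 2) F]
    [Fintype (Module.Dual (ZMod 2) F)]
    (m k : ℕ) (hm : 3 ≤ m) (hke : Even k) (hk : 4 ≤ k) (hk' : k ≤ 2 ^ m - 4)
    (hcard : Fintype.card F = 2 ^ m)
    (hcardD : Fintype.card (Module.Dual (ZMod 2) F) = 2 ^ m)
    (T : Finset F) (hT : #T = 3) :
    ((2 ^ m : ℕ) : ℚ) * #((((univ : Finset F) \ T).powersetCard (k - 3)).filter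
        fun U => ∑ x ∈ U, x = ∑ x ∈ T, x)
      = ((2 ^ m - 3).choose (k - 3) : ℚ)
        + (-1 : ℚ) ^ (k / 2) * ((k : ℚ) - 1) * ((2 ^ (m - 1) - 2).choose (k / 2 - 2) : ℚ) := by
  classical
  -- numeric setup
  set h : ℕ := 2 ^ (m - 1) with hh_def
  have hq2h : 2 ^ m = 2 * h := by
    rw [hh_def, ← pow_succ']
    congr 1
    omega
  have hh4 : 4 ≤ h := by
    have : 2 ^ 2 ≤ 2 ^ (m - 1) := Nat.pow_le_pow_right (by norm_num) (by omega)
    simpa using this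
  have hk2 : k / 2 * 2 = k := Nat.div_mul_cancel hke.two_dvd
  set d : ℕ := k / 2 - 2 with hd_def
  set u : ℕ := h - k / 2 with hu_def
  have hkq : k ≤ 2 * h - 4 := by omega
  have hud : u + d = h - 2 := by omega
  have hu2 : 2 ≤ u := by omega
  have hd2 : k / 2 = d + 2 := by omega
  -- basic char-2 fact
  have add_self : ∀ x : F, x + x = 0 := by
    intro x
    have h2 : (1 + 1 : ZMod 2) = 0 := by decide
    calc x + x = (1 : ZMod 2) • x + (1 : ZMod 2) • x := by rw [one_smul]
      _ = ((1 + 1 : ZMod 2)) • x := (add_smul _ _ x).symm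
      _ = 0 := by rw [h2, zero_smul]
  obtain ⟨a, b, c, hab, hac, hbc, hTabc⟩ := Finset.card_eq_three.mp hT
  set W : Finset F := univ \ T with hW_def
  have hWcard : #W = 2 ^ m - 3 := by
    rw [hW_def, card_sdiff_of_subset (subset_univ T), card_univ, hcard, hT]
  have hjW : k - 3 ≤ #W := by omega
  have hidx : #W - (k - 3) = 2 * u := by omega
  set σ : F := ∑ x ∈ T, x with hσ_def
  set val : Module.Dual (ZMod 2) F → ℚ := fun φ =>
    eps (φ σ) * (∏ x ∈ W, ((X : ℚ[X]) + C (eps (φ x)))).coeff (#W - (k - 3)) with hval_def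
  -- Step 1-4: the character sum identity
  have key : ((2 ^ m : ℕ) : ℚ) * #((W.powersetCard (k - 3)).filter
      fun U => ∑ x ∈ U, x = σ) = ∑ φ : Module.Dual (ZMod 2) F, val φ := by
    have step1 : ((2 ^ m : ℕ) : ℚ) * #((W.powersetCard (k - 3)).filter
        fun U => ∑ x ∈ U, x = σ)
        = ∑ U ∈ W.powersetCard (k - 3),
            (if ∑ x ∈ U, x = σ then ((2 ^ m : ℕ) : ℚ) else 0) := by
      rw [Finset.sum_ite, Finset.sum_const, Finset.sum_const_zero, add_zero,
        nsmul_eq_mul, mul_comm]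
    have step2 : ∀ U : Finset F, (if ∑ x ∈ U, x = σ then ((2 ^ m : ℕ) : ℚ) else 0)
        = ∑ φ : Module.Dual (ZMod 2) F, eps (φ (∑ x ∈ U, x + σ)) := by
      intro U
      by_cases hcase : ∑ x ∈ U, x = σ
      · rw [if_pos hcase, hcase, add_self σ]
        rw [Finset.sum_congr rfl fun φ _ => by rw [map_zero φ, eps_zero]]
        rw [Finset.sum_const, card_univ, hcardD, nsmul_eq_mul, mul_one]
      · rw [if_neg hcase]
        symm
        apply sum_eps_dual
        intro h0
        apply hcase
        have : ∑ x ∈ U, x + σ + σ = σ := by rw [h0, zero_add]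
        rwa [add_assoc, add_self, add_zero] at this
    have step4 : ∀ φ : Module.Dual (ZMod 2) F,
        ∑ U ∈ W.powersetCard (k - 3), eps (φ (∑ x ∈ U, x + σ)) = val φ := by
      intro φ
      have h1 : ∀ U ∈ W.powersetCard (k - 3),
          eps (φ (∑ x ∈ U, x + σ)) = eps (φ σ) * ∏ x ∈ U, eps (φ x) := by
        intro U hU
        rw [map_add, eps_add, map_sum, eps_sum, mul_comm]
      rw [Finset.sum_congr rfl h1, ← Finset.mul_sum, hval_def]
      congr 1
      rw [Finset.prod_X_add_C_coeff W (fun x => eps (φ x)) (Nat.sub_le _ _),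
        Nat.sub_sub_self hjW]
    rw [step1, Finset.sum_congr rfl fun U _ => step2 U, Finset.sum_comm,
      Finset.sum_congr rfl fun φ _ => step4 φ]
  -- value at φ = 0
  have hval0 : val 0 = (((2 ^ m - 3).choose (k - 3) : ℕ) : ℚ) := by
    rw [hval_def]
    simp only [LinearMap.zero_apply, eps_zero, map_one, one_mul]
    rw [Finset.prod_const, coeff_X_add_one_pow, Nat.choose_symm hjW, hWcard]
  -- value at φ ≠ 0
  have hvalne : ∀ φ : Module.Dual (ZMod 2) F, φ ≠ 0 →
      val φ = if φ (a + b) = 0 ∧ φ (a + c) = 0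
        then (-1 : ℚ) ^ d * (((h - 3).choose u : ℚ) - 3 * ((h - 3).choose (u - 1) : ℚ))
        else (-1 : ℚ) ^ d * (((h - 2).choose u : ℚ)) := by
    intro φ hφ
    set z : ℕ := #(T.filter fun x => φ x = 0) with hz_def
    have hz3 : z ≤ 3 := by
      rw [hz_def, ← hT]
      exact Finset.card_filter_le _ _
    have hker : #(univ.filter fun x : F => φ x = 0) = h := by
      have := card_ker_eval φ hφ
      rw [hcard] at this
      omega
    have hTW : ∀ p : F → Prop, ∀ [DecidablePred p], #(univ.filter p)
        = #(T.filter p) + #(W.filter p) := by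
      intro p _
      have hun : (univ : Finset F) = T ∪ W := by
        rw [hW_def, Finset.union_sdiff_of_subset (subset_univ T)]
      rw [hun, Finset.filter_union, Finset.card_union_of_disjoint]
      exact Finset.disjoint_filter_filter (Finset.disjoint_sdiff)
    have hP : #(W.filter fun x => φ x = 0) = h - z := by
      have := hTW (fun x => φ x = 0)
      rw [hker] at this
      omega
    have hzh : z ≤ h := by omega
    have hNtot := Finset.card_filter_add_card_filter_not
      (s := W) (p := fun x => φ x = 0)
    have hN : #(W.filter fun x => ¬ φ x = 0) = h - 3 + z := by
      rw [hWcard] at hNtot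
      omega
    have hprod : ∏ x ∈ W, ((X : ℚ[X]) + C (eps (φ x)))
        = ((X : ℚ[X]) + 1) ^ (h - z) * (X - 1) ^ (h - 3 + z) := by
      rw [← Finset.prod_filter_mul_prod_filter_not W (fun x => φ x = 0)]
      congr 1
      · rw [Finset.prod_congr rfl (fun x hx => by
          rw [(Finset.mem_filter.mp hx).2, eps_zero, map_one]), Finset.prod_const, hP]
      · rw [Finset.prod_congr rfl (fun x hx => by
          rw [eps_of_ne (Finset.mem_filter.mp hx).2, map_neg, map_one,
            ← sub_eq_add_neg]), Finset.prod_const, hN]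
    have hTnot : #(T.filter fun x => ¬ φ x = 0) = 3 - z := by
      have := Finset.card_filter_add_card_filter_not
        (s := T) (p := fun x => φ x = 0)
      rw [hT] at this
      omega
    have hsign : eps (φ σ) = (-1 : ℚ) ^ (3 - z) := by
      rw [hσ_def, map_sum, eps_sum,
        ← Finset.prod_filter_mul_prod_filter_not T (fun x => φ x = 0),
        Finset.prod_congr rfl (fun x hx => by
          rw [(Finset.mem_filter.mp hx).2, eps_zero]),
        Finset.prod_congr rfl (fun x hx => eps_of_ne (Finset.mem_filter.mp hx).2),
        Finset.prod_const_one, one_mul, Finset.prod_const, hTnot]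
    have hmain : val φ = if z = 0 ∨ z = 3
        then (-1 : ℚ) ^ d * (((h - 3).choose u : ℚ) - 3 * ((h - 3).choose (u - 1) : ℚ))
        else (-1 : ℚ) ^ d * (((h - 2).choose u : ℚ)) := by
      rw [hval_def]
      simp only []
      rw [hprod, hsign, hidx]
      exact coeff_case h u d z hz3 hud (by omega) hu2
    rw [hmain]
    have hzval : z = (if φ a = 0 then 1 else 0) + (if φ b = 0 then 1 else 0)
        + (if φ c = 0 then 1 else 0) := by
      rw [hz_def, hTabc, card_filter_triple hab hac hbc]
    have h11 : (1 + 1 : ZMod 2) = 0 := by decide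
    rcases zmod2_cases (φ a) with ha | ha <;> rcases zmod2_cases (φ b) with hb | hb <;>
      rcases zmod2_cases (φ c) with hc | hc <;>
      · rw [hzval]
        simp only [ha, hb, hc, if_true, if_false, eq_self_iff_true, one_ne_zero,
          map_add]
        norm_num [h11, show (2 : ZMod 2) = 0 from by decide,
          show (1 : ZMod 2) ≠ 0 from by decide]
        all_goals simp [show (2 : ZMod 2) = 0 from by decide]
  -- assemble
  have hsplit := (Finset.add_sum_erase univ val (Finset.mem_univ
    (0 : Module.Dual (ZMod 2) F))).symm
  -- count of the "all equal" characters
  have habne : a + b ≠ 0 := by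
    intro h0
    exact hab (by
      have : a + b + b = b := by rw [h0, zero_add]
      rwa [add_assoc, add_self, add_zero] at this)
  have hacne : a + c ≠ 0 := by
    intro h0
    exact hac (by
      have : a + c + c = c := by rw [h0, zero_add]
      rwa [add_assoc, add_self, add_zero] at this)
  have hsumne : (a + b) + (a + c) ≠ 0 := by
    have : (a + b) + (a + c) = b + c := by
      have : (a + b) + (a + c) = (a + a) + (b + c) := by ring
      rw [this, add_self, zero_add]
    rw [this]
    intro h0
    exact hbc (by
      have : b + c + c = c := by rw [h0, zero_add]
      rwa [add_assoc, add_self, add_zero] at this)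
  have hC4 := card_allEq (a + b) (a + c) habne hacne hsumne
  rw [hcardD] at hC4
  set cQ : ℕ := #(univ.filter fun φ : Module.Dual (ZMod 2) F =>
    φ (a + b) = 0 ∧ φ (a + c) = 0) with hcQ_def
  have h0mem : (0 : Module.Dual (ZMod 2) F) ∈ univ.filter
      (fun φ : Module.Dual (ZMod 2) F => φ (a + b) = 0 ∧ φ (a + c) = 0) := by
    simp
  have hcQ1 : 1 ≤ cQ := Finset.card_pos.mpr ⟨0, h0mem⟩
  have herase_sum : ∑ φ ∈ univ.erase (0 : Module.Dual (ZMod 2) F), val φ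
      = ((cQ : ℚ) - 1) * ((-1 : ℚ) ^ d * (((h - 3).choose u : ℚ)
          - 3 * ((h - 3).choose (u - 1) : ℚ)))
        + (((2 ^ m : ℕ) : ℚ) - (cQ : ℚ)) * ((-1 : ℚ) ^ d * (((h - 2).choose u : ℚ))) := by
    rw [Finset.sum_congr rfl fun φ hφ => hvalne φ (Finset.mem_erase.mp hφ).1]
    rw [Finset.sum_ite, Finset.sum_const, Finset.sum_const]
    have he1 : (univ.erase (0 : Module.Dual (ZMod 2) F)).filter
        (fun φ => φ (a + b) = 0 ∧ φ (a + c) = 0)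
        = (univ.filter fun φ : Module.Dual (ZMod 2) F =>
            φ (a + b) = 0 ∧ φ (a + c) = 0).erase 0 := by
      rw [Finset.filter_erase]
    have hc1 : #((univ.erase (0 : Module.Dual (ZMod 2) F)).filter
        (fun φ => φ (a + b) = 0 ∧ φ (a + c) = 0)) = cQ - 1 := by
      rw [he1, Finset.card_erase_of_mem h0mem]
    have hctot := Finset.card_filter_add_card_filter_not
      (s := univ.erase (0 : Module.Dual (ZMod 2) F))
      (p := fun φ => φ (a + b) = 0 ∧ φ (a + c) = 0)
    have hcerase : #(univ.erase (0 : Module.Dual (ZMod 2) F)) = 2 ^ m - 1 := by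
      rw [Finset.card_erase_of_mem (Finset.mem_univ _), card_univ, hcardD]
    have hcQle : cQ ≤ 2 ^ m := by
      rw [← hcardD, ← card_univ]
      exact Finset.card_filter_le _ _
    have hc2 : #((univ.erase (0 : Module.Dual (ZMod 2) F)).filter
        (fun φ => ¬ (φ (a + b) = 0 ∧ φ (a + c) = 0))) = 2 ^ m - cQ := by
      omega
    rw [hc1, hc2, nsmul_eq_mul, nsmul_eq_mul]
    have hq1 : 1 ≤ 2 ^ m := Nat.one_le_two_pow
    push_cast [hcQ1, hcQle]
    ring
  -- final numeric identity
  rw [key, hsplit, hval0, herase_sum]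
  have hPas : (((h - 2).choose u : ℕ) : ℚ)
      = ((h - 3).choose (u - 1) : ℚ) + ((h - 3).choose u : ℚ) := by
    have h1 : h - 2 = (h - 3) + 1 := by omega
    have h2 : u = (u - 1) + 1 := by omega
    rw [h1, h2, Nat.choose_succ_succ]
    push_cast
    ring
  have hBinN : (h - 3).choose u * u = (h - 3).choose (u - 1) * d := by
    have := Nat.choose_succ_right_eq (h - 3) (u - 1)
    have h2 : u - 1 + 1 = u := by omega
    have h3 : h - 3 - (u - 1) = d := by omega
    rw [h2, h3] at this
    exact this
  have hBinQ : ((h - 3).choose u : ℚ) * (u : ℚ)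
      = ((h - 3).choose (u - 1) : ℚ) * (d : ℚ) := by exact_mod_cast hBinN
  have hsymm : (2 ^ (m - 1) - 2).choose (k / 2 - 2) = (h - 2).choose u := by
    rw [← hh_def, ← hd_def]
    rw [← Nat.choose_symm (by omega : d ≤ h - 2)]
    congr 1
    omega
  rw [hsymm]
  have hsgn : (-1 : ℚ) ^ (k / 2) = (-1 : ℚ) ^ d := by
    rw [hd2, pow_add]
    norm_num
  rw [hsgn]
  have hqQ : ((2 ^ m : ℕ) : ℚ) = 2 * (h : ℚ) := by
    rw [hq2h]
    push_cast
    ring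
  have hcQQ : (4 : ℚ) * (cQ : ℚ) = 2 * (h : ℚ) := by
    rw [← hqQ]
    exact_mod_cast hC4
  have hkQ : (k : ℚ) = 2 * (d : ℚ) + 4 := by
    have : k = 2 * d + 4 := by omega
    exact_mod_cast this
  have huQ : (u : ℚ) + (d : ℚ) = (h : ℚ) - 2 := by
    have h2h : 2 ≤ h := by omega
    have : (u + d : ℕ) = h - 2 := hud
    have := congrArg (fun t : ℕ => (t : ℚ)) this
    push_cast [Nat.cast_sub h2h] at this
    linarith [this]
  rw [hPas, hqQ, hkQ]
  linear_combination ((-1 : ℚ) ^ d) * 2 * hBinQ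
    - ((-1 : ℚ) ^ d) * (((h - 3).choose (u - 1) : ℚ)) * hcQQ
    - ((-1 : ℚ) ^ d) * 2 * (((h - 3).choose u : ℚ)) * huQ

theorem stmt12 (m k : ℕ) (hm : 3 ≤ m) (hke : Even k) (hk : 4 ≤ k) (hk' : k ≤ 2 ^ m - 4)
    (F : Type*) [Field F] [Fintype F] [DecidableEq F]
    (hcard : Fintype.card F = 2 ^ m)
    (θ : Fin (2 ^ m - 1) → F) (hθinj : Function.Injective θ) (hθne : ∀ j, θ j ≠ 0) :
    ∀ t : Finset (Fin (2 ^ m)), t.card = 3 →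
      ({s ∈ blocks (dualCode (rowSpan (G4 m k θ))) k | t ⊆ s}.ncard : ℚ) =
        (1 / (2 : ℚ) ^ m) *
          (((2 ^ m - 3).choose (k - 3) : ℚ) +
            (-1 : ℚ) ^ (k / 2) * ((k : ℚ) - 1) * ((2 ^ (m - 1) - 2).choose (k / 2 - 2) : ℚ)) := by
  intro t ht
  classical
  -- char 2 and module instances
  have hp : CharP F 2 := by
    set p := ringChar F with hpdef
    haveI hcp : CharP F p := ringChar.charP F
    have hpp : p.Prime := CharP.char_is_prime F p
    obtain ⟨n, hn⟩ := FiniteField.card F p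
    have hp2 : p = 2 := by
      have hdvd : p ∣ 2 ^ m := by
        rw [← hcard, hn.2]
        exact dvd_pow_self p n.2.ne'
      have := hpp.dvd_of_dvd_pow (n := m) hdvd
      exact (Nat.prime_dvd_prime_iff_eq hpp Nat.prime_two).mp this
    rwa [hp2] at hcp
  letI : Algebra (ZMod 2) F := ZMod.algebra F 2
  haveI : Finite (Module.Dual (ZMod 2) F) :=
    Finite.of_injective _ (DFunLike.coe_injective (F := Module.Dual (ZMod 2) F))
  letI : Fintype (Module.Dual (ZMod 2) F) := Fintype.ofFinite _
  have hcardD : Fintype.card (Module.Dual (ZMod 2) F) = 2 ^ m := by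
    have h1 : Fintype.card F = 2 ^ (Module.finrank (ZMod 2) F) := by
      have := Module.card_eq_pow_finrank (K := ZMod 2) (V := F)
      simpa using this
    have h2 := Module.card_eq_pow_finrank (K := ZMod 2) (V := Module.Dual (ZMod 2) F)
    rw [h2, Subspace.dual_finrank_eq]
    rw [hcard] at h1
    have h3 : Module.finrank (ZMod 2) F = m :=
      Nat.pow_right_injective (le_refl 2) (by simpa [ZMod.card] using h1.symm)
    rw [h3]
    simp [ZMod.card]
  -- the point map and its bijectivity
  have hptinj : Function.Injective (pt m θ) := pt_injective hθinj hθne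
  have hptbij : Function.Bijective (pt m θ) := by
    rw [Fintype.bijective_iff_injective_and_card]
    exact ⟨hptinj, by simp [hcard]⟩
  let ptE : Fin (2 ^ m) ≃ F := Equiv.ofBijective (pt m θ) hptbij
  -- char-2 additive fact
  have add_self : ∀ x : F, x + x = 0 := by
    intro x
    have h2 : (1 + 1 : ZMod 2) = 0 := by decide
    calc x + x = (1 : ZMod 2) • x + (1 : ZMod 2) • x := by rw [one_smul]
      _ = ((1 + 1 : ZMod 2)) • x := (add_smul _ _ x).symm
      _ = 0 := by rw [h2, zero_smul]
  -- step 1 : the set as a Finset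
  set 𝒮 : Finset (Finset (Fin (2 ^ m))) := univ.filter
    (fun S => (#S = k ∧ ∑ j ∈ S, pt m θ j = 0) ∧ t ⊆ S) with h𝒮
  have hset : {s ∈ blocks (dualCode (rowSpan (G4 m k θ))) k | t ⊆ s} = ↑𝒮 := by
    ext S
    constructor
    · rintro ⟨hmem, hsub⟩
      rw [blocks_eq hk hcard θ hθinj hθne] at hmem
      rw [Finset.mem_coe, h𝒮, Finset.mem_filter]
      exact ⟨Finset.mem_univ _, hmem, hsub⟩
    · intro hmem
      rw [Finset.mem_coe, h𝒮, Finset.mem_filter] at hmem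
      refine ⟨?_, hmem.2.2⟩
      rw [blocks_eq hk hcard θ hθinj hθne]
      exact hmem.2.1
  rw [hset, Set.ncard_coe_finset]
  -- step 2 : transfer to subsets of F
  set T : Finset F := t.image (pt m θ) with hT_def
  have hTcard : #T = 3 := by
    rw [hT_def, Finset.card_image_of_injective t hptinj, ht]
  set 𝒰 : Finset (Finset F) := (((univ : Finset F) \ T).powersetCard (k - 3)).filter
    (fun U => ∑ x ∈ U, x = ∑ x ∈ T, x) with h𝒰
  have hsymm_pt : ∀ j, ptE.symm (pt m θ j) = j := fun j => ptE.symm_apply_apply j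
  have happ_symm : ∀ y : F, pt m θ (ptE.symm y) = y := fun y => ptE.apply_symm_apply y
  have hbij : #𝒮 = #𝒰 := by
    apply Finset.card_bij' (fun S _ => (S.image (pt m θ)) \ T)
      (fun U _ => (U ∪ T).image ptE.symm)
    · -- forward maps into 𝒰
      intro S hS
      rw [h𝒮, Finset.mem_filter] at hS
      obtain ⟨-, ⟨hScard, hSsum⟩, htS⟩ := hS
      have hTsub : T ⊆ S.image (pt m θ) := Finset.image_subset_image htS
      have himgsum : ∑ x ∈ S.image (pt m θ), x = 0 := by
        rw [Finset.sum_image (fun a _ b _ h => hptinj h)]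
        exact hSsum
      rw [h𝒰, Finset.mem_filter, Finset.mem_powersetCard]
      have h1 : ∑ x ∈ S.image (pt m θ) \ T, x + ∑ x ∈ T, x = 0 := by
        rw [Finset.sum_sdiff hTsub, himgsum]
      refine ⟨⟨Finset.sdiff_subset_sdiff (Finset.subset_univ _) le_rfl, ?_⟩, ?_⟩
      · rw [Finset.card_sdiff_of_subset hTsub, Finset.card_image_of_injective S hptinj, hScard, hTcard]
      · calc ∑ x ∈ S.image (pt m θ) \ T, x
            = ∑ x ∈ S.image (pt m θ) \ T, x + (∑ x ∈ T, x + ∑ x ∈ T, x) := by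
              rw [add_self, add_zero]
          _ = (∑ x ∈ S.image (pt m θ) \ T, x + ∑ x ∈ T, x) + ∑ x ∈ T, x := by ring
          _ = ∑ x ∈ T, x := by rw [h1, zero_add]
    · -- backward maps into 𝒮
      intro U hU
      rw [h𝒰, Finset.mem_filter, Finset.mem_powersetCard] at hU
      obtain ⟨⟨hUW, hUcard⟩, hUsum⟩ := hU
      have hdisj : Disjoint U T := Finset.disjoint_left.mpr fun x hx =>
        (Finset.mem_sdiff.mp (hUW hx)).2
      rw [h𝒮, Finset.mem_filter]
      refine ⟨Finset.mem_univ _, ⟨?_, ?_⟩, ?_⟩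
      · rw [Finset.card_image_of_injective _ ptE.symm.injective,
          Finset.card_union_of_disjoint hdisj, hUcard, hTcard]
        omega
      · rw [Finset.sum_image (fun a _ b _ h => ptE.symm.injective h)]
        rw [Finset.sum_congr rfl fun y _ => by rw [happ_symm y]]
        rw [Finset.sum_union hdisj, hUsum, add_self]
      · intro i hi
        have hpti : pt m θ i ∈ T := hT_def ▸ Finset.mem_image_of_mem _ hi
        exact Finset.mem_image.mpr ⟨pt m θ i, Finset.mem_union_right _ hpti, hsymm_pt i⟩
    · -- left inverse
      intro S hS
      rw [h𝒮, Finset.mem_filter] at hS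
      obtain ⟨-, -, htS⟩ := hS
      have hTsub : T ⊆ S.image (pt m θ) := Finset.image_subset_image htS
      rw [Finset.sdiff_union_of_subset hTsub, Finset.image_image,
        show (⇑ptE.symm ∘ pt m θ) = id from funext hsymm_pt, Finset.image_id]
    · -- right inverse
      intro U hU
      rw [h𝒰, Finset.mem_filter, Finset.mem_powersetCard] at hU
      obtain ⟨⟨hUW, -⟩, -⟩ := hU
      have hdisj : Disjoint U T := Finset.disjoint_left.mpr fun x hx =>
        (Finset.mem_sdiff.mp (hUW hx)).2
      rw [Finset.image_image,
        show (pt m θ ∘ ⇑ptE.symm) = id from funext happ_symm, Finset.image_id,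
        Finset.union_sdiff_right, Finset.sdiff_eq_self_of_disjoint hdisj]
  rw [hbij]
  -- step 3 : the counting theorem
  have hcm := count_main m k hm hke hk hk' hcard hcardD T hTcard
  have h2m : ((2 ^ m : ℕ) : ℚ) = (2 : ℚ) ^ m := by push_cast; rfl
  rw [h2m] at hcm
  rw [← h𝒰] at hcm
  rw [← hcm, one_div, inv_mul_cancel_left₀ (pow_ne_zero _ (two_ne_zero))]
end

section
/- Let m ≥ 3 and let ℓ ≥ 1 be an integer with 2ℓ+1 < 2^m−1. Then N(2ℓ+1, 0, F_{2^m}^*) + ((2^m−2ℓ)/(2ℓ))·N(2ℓ−1, 0, F_{2^m}^*) = (1/2^m)·binom(2^m, 2ℓ+1). -/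
set_option linter.unusedSectionVars false
set_option maxHeartbeats 1000000

open Finset

/-- `Nsub k D` is the number of `k`-element subsets `{x₁, …, xₖ}` of `D` with
`x₁ + x₂ + ⋯ + xₖ = 0`. -/
def Nsub {F : Type*} [DecidableEq F] [AddCommMonoid F] (k : ℕ) (D : Finset F) : ℕ :=
  ((D.powersetCard k).filter fun s => s.sum id = 0).card

section Aux

variable {F : Type*} [Field F] [Fintype F] [DecidableEq F] [CharP F 2]

private lemma odd_smul' {k : ℕ} (hk : Odd k) (a : F) : k • a = a := by
  obtain ⟨j, rfl⟩ := hk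
  rw [add_nsmul, one_nsmul, mul_comm, mul_nsmul, CharTwo.two_nsmul]
  simp

private lemma sum_image_add' (S : Finset F) (a : F) :
    (S.image (· + a)).sum id = S.sum id + S.card • a := by
  rw [Finset.sum_image (fun x _ y _ h => by simpa using add_right_cancel h)]
  simp only [id]
  rw [Finset.sum_add_distrib, Finset.sum_const]

private lemma image_add_add' (S : Finset F) (a : F) : (S.image (· + a)).image (· + a) = S := by
  rw [Finset.image_image,
    show ((· + a) ∘ (· + a)) = id from funext fun x => by
      simp [Function.comp, add_assoc, CharTwo.add_self_eq_zero]]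
  exact Finset.image_id

private lemma lemA' {k : ℕ} (hk : Odd k) :
    ((univ.powersetCard k).filter fun s : Finset F => s.sum id = 0).card * Fintype.card F
      = (Fintype.card F).choose k := by
  rw [← Finset.card_univ (α := F), ← Finset.card_powersetCard k (univ : Finset F),
    ← Finset.card_product]
  refine Finset.card_bij' (fun p _ => p.1.image (· + p.2))
    (fun T _ => (T.image (· + T.sum id), T.sum id)) ?_ ?_ ?_ ?_
  · rintro ⟨S, a⟩ hp
    simp only [mem_product, mem_filter, mem_powersetCard] at hp
    obtain ⟨⟨⟨-, hc⟩, -⟩, -⟩ := hp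
    simp only [mem_powersetCard]
    exact ⟨subset_univ _, by
      rw [Finset.card_image_of_injective _ (add_left_injective a), hc]⟩
  · rintro T hT
    simp only [mem_powersetCard] at hT
    simp only [mem_product, mem_filter, mem_powersetCard, mem_univ, and_true]
    refine ⟨⟨subset_univ _, by
      rw [Finset.card_image_of_injective _ (add_left_injective _), hT.2]⟩, ?_⟩
    rw [sum_image_add', hT.2, odd_smul' hk, CharTwo.add_self_eq_zero]
  · rintro ⟨S, a⟩ hp
    simp only [mem_product, mem_filter, mem_powersetCard] at hp
    obtain ⟨⟨⟨-, hc⟩, hs⟩, -⟩ := hp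
    have hsum : (S.image (· + a)).sum id = a := by
      rw [sum_image_add', hs, hc, odd_smul' hk, zero_add]
    simp only [hsum, Prod.mk.injEq, and_true]
    exact image_add_add' S a
  · rintro T hT
    exact image_add_add' T (T.sum id)

private lemma lemB' {k : ℕ} (hk : 1 ≤ k) :
    ((univ.powersetCard k).filter fun s : Finset F => s.sum id = 0).card
      = Nsub k ({0}ᶜ : Finset F) + Nsub (k - 1) ({0}ᶜ : Finset F) := by
  classical
  rw [← Finset.card_filter_add_card_filter_not
    (s := (univ.powersetCard k).filter fun s : Finset F => s.sum id = 0)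
    (p := fun s => (0 : F) ∉ s)]
  congr 1
  · unfold Nsub
    congr 1
    ext s
    simp only [mem_filter, mem_powersetCard, Finset.subset_compl_singleton]
    constructor
    · rintro ⟨⟨⟨-, hc⟩, hs⟩, h0⟩; exact ⟨⟨h0, hc⟩, hs⟩
    · rintro ⟨⟨h0, hc⟩, hs⟩; exact ⟨⟨⟨subset_univ _, hc⟩, hs⟩, h0⟩
  · unfold Nsub
    refine Finset.card_bij' (fun s _ => s.erase 0) (fun t _ => insert 0 t) ?_ ?_ ?_ ?_
    · intro s hs
      simp only [mem_filter, mem_powersetCard, not_not] at hs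
      obtain ⟨⟨⟨-, hc⟩, hsum⟩, h0⟩ := hs
      simp only [mem_filter, mem_powersetCard, Finset.subset_compl_singleton]
      refine ⟨⟨Finset.notMem_erase _ _, by rw [Finset.card_erase_of_mem h0, hc]⟩, ?_⟩
      rw [← Finset.add_sum_erase _ _ h0] at hsum
      simpa using hsum
    · intro t ht
      simp only [mem_filter, mem_powersetCard, Finset.subset_compl_singleton] at ht
      obtain ⟨⟨h0, hc⟩, hsum⟩ := ht
      simp only [mem_filter, mem_powersetCard, not_not]
      refine ⟨⟨⟨subset_univ _, ?_⟩, ?_⟩, Finset.mem_insert_self _ _⟩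
      · rw [Finset.card_insert_of_notMem h0, hc, Nat.sub_add_cancel hk]
      · rw [Finset.sum_insert h0]; simpa using hsum
    · intro s hs
      simp only [mem_filter, not_not] at hs
      exact Finset.insert_erase hs.2
    · intro t ht
      simp only [mem_filter, mem_powersetCard, Finset.subset_compl_singleton] at ht
      exact Finset.erase_insert ht.1.1

private lemma sum_erase_eq' {S : Finset F} {x : F} (hx : x ∈ S) (hS : S.sum id = 0) :
    (S.erase x).sum id = x := by
  have h := Finset.add_sum_erase S id hx
  rw [hS] at h
  have := CharTwo.add_self_eq_zero (R := F) x
  simp only [id] at h ⊢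
  linear_combination h - this

private lemma lemC' {n : ℕ} :
    (n + 1) * Nsub (n + 1) ({0}ᶜ : Finset F)
      = ((({0}ᶜ : Finset F).powersetCard n).filter
          fun T => T.sum id ≠ 0 ∧ T.sum id ∉ T).card := by
  classical
  set A := (({0}ᶜ : Finset F).powersetCard (n+1)).filter fun s => s.sum id = 0 with hA
  have h1 : (A.sigma fun S => (S : Finset F)).card = (n + 1) * A.card := by
    rw [Finset.card_sigma]
    rw [Finset.sum_congr rfl (fun S hS => ?_), Finset.sum_const, smul_eq_mul, mul_comm]
    simp only [hA, mem_filter, mem_powersetCard] at hS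
    exact hS.1.2
  rw [show Nsub (n+1) ({0}ᶜ : Finset F) = A.card from rfl, ← h1]
  refine Finset.card_bij' (fun p _ => p.1.erase p.2)
    (fun T _ => ⟨insert (T.sum id) T, T.sum id⟩) ?_ ?_ ?_ ?_
  · rintro ⟨S, x⟩ hp
    simp only [Finset.mem_sigma, hA, mem_filter, mem_powersetCard] at hp
    obtain ⟨⟨⟨hsub, hc⟩, hsum⟩, hx⟩ := hp
    have hse := sum_erase_eq' hx hsum
    simp only [mem_filter, mem_powersetCard, hse]
    refine ⟨⟨(Finset.erase_subset _ _).trans hsub, by rw [Finset.card_erase_of_mem hx, hc]; rfl⟩,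
      ?_, Finset.notMem_erase _ _⟩
    have : x ∈ ({0}ᶜ : Finset F) := hsub hx
    simpa using this
  · rintro T hT
    simp only [mem_filter, mem_powersetCard] at hT
    obtain ⟨⟨hsub, hc⟩, hne, hni⟩ := hT
    simp only [Finset.mem_sigma, hA, mem_filter, mem_powersetCard]
    refine ⟨⟨⟨?_, by rw [Finset.card_insert_of_notMem hni, hc]⟩, ?_⟩, Finset.mem_insert_self _ _⟩
    · intro y hy
      rcases Finset.mem_insert.mp hy with rfl | hy
      · simpa using hne
      · exact hsub hy
    · rw [Finset.sum_insert hni]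
      simp only [id]
      rw [show ∑ x ∈ T, x = T.sum id from rfl, CharTwo.add_self_eq_zero]
  · rintro ⟨S, x⟩ hp
    simp only [Finset.mem_sigma, hA, mem_filter, mem_powersetCard] at hp
    obtain ⟨⟨⟨hsub, hc⟩, hsum⟩, hx⟩ := hp
    have hse := sum_erase_eq' hx hsum
    simp only [hse]
    rw [Finset.insert_erase hx]
  · rintro T hT
    simp only [mem_filter, mem_powersetCard] at hT
    exact Finset.erase_insert hT.2.2

private lemma lemD' {n : ℕ} (hn : 1 ≤ n) :
    ((({0}ᶜ : Finset F).powersetCard n).filter fun T => T.sum id ∈ T).card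
      = (Fintype.card F - n) * Nsub (n - 1) ({0}ᶜ : Finset F) := by
  classical
  set A := (({0}ᶜ : Finset F).powersetCard (n-1)).filter fun s => s.sum id = 0 with hA
  have h1 : (A.sigma fun T' => (({0}ᶜ : Finset F) \ T')).card
      = (Fintype.card F - n) * A.card := by
    rw [Finset.card_sigma]
    rw [Finset.sum_congr rfl (fun T' hT' => ?_), Finset.sum_const, smul_eq_mul, mul_comm]
    simp only [hA, mem_filter, mem_powersetCard] at hT'
    rw [Finset.card_sdiff_of_subset hT'.1.1, hT'.1.2, Finset.card_compl, Finset.card_singleton]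
    omega
  rw [show Nsub (n-1) ({0}ᶜ : Finset F) = A.card from rfl, ← h1]
  refine (Finset.card_bij' (fun p _ => insert p.2 p.1)
    (fun T _ => ⟨T.erase (T.sum id), T.sum id⟩) ?_ ?_ ?_ ?_).symm
  · rintro ⟨T', t⟩ hp
    simp only [Finset.mem_sigma, hA, mem_filter, mem_powersetCard, Finset.mem_sdiff] at hp
    obtain ⟨⟨⟨hsub, hc⟩, hsum⟩, ht, hni⟩ := hp
    have hins : (insert t T').sum id = t := by
      rw [Finset.sum_insert hni]
      simp only [id] at hsum ⊢
      rw [hsum, add_zero]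
    simp only [mem_filter, mem_powersetCard, hins]
    refine ⟨⟨Finset.insert_subset ht hsub, ?_⟩, Finset.mem_insert_self _ _⟩
    rw [Finset.card_insert_of_notMem hni, hc]
    omega
  · rintro T hT
    simp only [mem_filter, mem_powersetCard] at hT
    obtain ⟨⟨hsub, hc⟩, hmem⟩ := hT
    have hse : (T.erase (T.sum id)).sum id = 0 := by
      have h := Finset.add_sum_erase T id hmem
      simp only [id] at h ⊢
      linear_combination h
    simp only [Finset.mem_sigma, hA, mem_filter, mem_powersetCard, Finset.mem_sdiff]
    exact ⟨⟨⟨(Finset.erase_subset _ _).trans hsub,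
      by rw [Finset.card_erase_of_mem hmem, hc]⟩, hse⟩, hsub hmem, Finset.notMem_erase _ _⟩
  · rintro ⟨T', t⟩ hp
    simp only [Finset.mem_sigma, hA, mem_filter, mem_powersetCard, Finset.mem_sdiff] at hp
    obtain ⟨⟨⟨hsub, hc⟩, hsum⟩, ht, hni⟩ := hp
    have hins : (insert t T').sum id = t := by
      rw [Finset.sum_insert hni]
      simp only [id] at hsum ⊢
      rw [hsum, add_zero]
    simp only [hins]
    rw [Finset.erase_insert hni]
  · rintro T hT
    simp only [mem_filter, mem_powersetCard] at hT
    exact Finset.insert_erase hT.2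

private lemma lemE' {n : ℕ} : (({0}ᶜ : Finset F).powersetCard n).card
    = Nsub n ({0}ᶜ : Finset F)
      + ((({0}ᶜ : Finset F).powersetCard n).filter fun T => T.sum id ∈ T).card
      + ((({0}ᶜ : Finset F).powersetCard n).filter fun T => T.sum id ≠ 0 ∧ T.sum id ∉ T).card := by
  classical
  rw [← Finset.card_filter_add_card_filter_not
    (s := ({0}ᶜ : Finset F).powersetCard n) (p := fun T => T.sum id = 0),
    ← Finset.card_filter_add_card_filter_not
    (s := (({0}ᶜ : Finset F).powersetCard n).filter fun T => ¬ T.sum id = 0)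
    (p := fun T => T.sum id ∈ T), Finset.filter_filter, Finset.filter_filter, add_assoc]
  have hAeq : ((({0}ᶜ : Finset F).powersetCard n).filter
        fun T => ¬ T.sum id = 0 ∧ T.sum id ∈ T)
      = (({0}ᶜ : Finset F).powersetCard n).filter fun T => T.sum id ∈ T := by
    ext T
    simp only [mem_filter, mem_powersetCard, Finset.subset_compl_singleton]
    constructor
    · rintro ⟨⟨h1, h2⟩, -, h3⟩; exact ⟨⟨h1, h2⟩, h3⟩
    · rintro ⟨⟨h1, h2⟩, h3⟩
      exact ⟨⟨h1, h2⟩, fun h0 => h1 (h0 ▸ h3), h3⟩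
  have hBeq : ((({0}ᶜ : Finset F).powersetCard n).filter
        fun T => ¬ T.sum id = 0 ∧ T.sum id ∉ T)
      = (({0}ᶜ : Finset F).powersetCard n).filter fun T => T.sum id ≠ 0 ∧ T.sum id ∉ T := by
    ext T
    simp [mem_filter, and_assoc]
  rw [hAeq, hBeq]
  rfl

end Aux

private lemma chooseId' (N k : ℕ) :
    (N + 1) * (N + 1).choose (k + 1)
      = (N + 1) * N.choose (k + 1) + (k + 1) * (N + 1).choose (k + 1) := by
  have h := Nat.add_one_mul_choose_eq N k
  calc (N + 1) * (N + 1).choose (k + 1)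
      = (N + 1) * (N.choose k + N.choose (k + 1)) := by rw [Nat.choose_succ_succ']
    _ = (N + 1) * N.choose k + (N + 1) * N.choose (k + 1) := by ring
    _ = (N + 1).choose (k + 1) * (k + 1) + (N + 1) * N.choose (k + 1) := by rw [h]
    _ = (N + 1) * N.choose (k + 1) + (k + 1) * (N + 1).choose (k + 1) := by ring

theorem stmt13 (m ℓ : ℕ) (hm : 3 ≤ m) (hℓ : 1 ≤ ℓ) (hlt : 2 * ℓ + 1 < 2 ^ m - 1)
    (F : Type*) [Field F] [Fintype F] [DecidableEq F]
    (hcard : Fintype.card F = 2 ^ m) :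
    (Nsub (2 * ℓ + 1) ({0}ᶜ : Finset F) : ℚ) +
        (((2 : ℚ) ^ m - 2 * (ℓ : ℚ)) / (2 * (ℓ : ℚ))) * (Nsub (2 * ℓ - 1) ({0}ᶜ : Finset F) : ℚ) =
      (1 / (2 : ℚ) ^ m) * ((2 ^ m).choose (2 * ℓ + 1) : ℚ) := by
  classical
  -- characteristic 2
  haveI : CharP F 2 := by
    have h := ringChar.charP F
    obtain ⟨n, hp, hc⟩ := FiniteField.card F (ringChar F)
    rw [hcard] at hc
    have hdvd : ringChar F ∣ 2 ^ m := hc ▸ dvd_pow_self (ringChar F) (by simp [n.ne_zero])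
    have h2 : ringChar F = 2 :=
      (Nat.prime_dvd_prime_iff_eq hp Nat.prime_two).mp (hp.dvd_of_dvd_pow hdvd)
    rwa [h2] at h
  set q : ℕ := 2 ^ m with hq
  have hq8 : 8 ≤ q := by
    calc (8 : ℕ) = 2 ^ 3 := by norm_num
    _ ≤ 2 ^ m := Nat.pow_le_pow_right (by norm_num) hm
  have hqℓ : 2 * ℓ + 3 ≤ q := by omega
  set n1 := Nsub (2 * ℓ + 1) ({0}ᶜ : Finset F) with hn1
  set n0 := Nsub (2 * ℓ) ({0}ᶜ : Finset F) with hn0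
  set a := Nsub (2 * ℓ - 1) ({0}ᶜ : Finset F) with ha
  set b := Nsub (2 * ℓ - 2) ({0}ᶜ : Finset F) with hb
  have hcompl : (({0}ᶜ : Finset F)).card = q - 1 := by
    rw [Finset.card_compl, Finset.card_singleton, hcard]
  -- E1
  have E1 : (n1 + n0) * q = q.choose (2 * ℓ + 1) := by
    have h := lemA' (F := F) (k := 2 * ℓ + 1) ⟨ℓ, by ring⟩
    rw [lemB' (by omega), hcard] at h
    rw [show (2 * ℓ + 1 - 1) = 2 * ℓ by omega] at h
    exact h
  -- E2
  have E2 : (a + b) * q = q.choose (2 * ℓ - 1) := by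
    have h := lemA' (F := F) (k := 2 * ℓ - 1) ⟨ℓ - 1, by omega⟩
    rw [lemB' (by omega), hcard] at h
    rw [show (2 * ℓ - 1 - 1) = 2 * ℓ - 2 by omega] at h
    exact h
  -- E3
  have E3 : (q - 1).choose (2 * ℓ - 1)
      = a + (q - (2 * ℓ - 1)) * b + 2 * ℓ * n0 := by
    have h := lemE' (F := F) (n := 2 * ℓ - 1)
    rw [Finset.card_powersetCard, hcompl, lemD' (by omega), hcard,
      show (2 * ℓ - 1 - 1) = 2 * ℓ - 2 by omega] at h
    have hc := lemC' (F := F) (n := 2 * ℓ - 1)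
    rw [show (2 * ℓ - 1 + 1) = 2 * ℓ by omega] at hc
    rw [← hc] at h
    exact h
  -- E4
  have E4 : q * q.choose (2 * ℓ - 1)
      = q * (q - 1).choose (2 * ℓ - 1) + (2 * ℓ - 1) * q.choose (2 * ℓ - 1) := by
    have h := chooseId' (q - 1) (2 * ℓ - 2)
    rw [show q - 1 + 1 = q by omega, show 2 * ℓ - 2 + 1 = 2 * ℓ - 1 by omega] at h
    exact h
  -- cast everything to ℚ
  have hsub1 : ((q - (2 * ℓ - 1) : ℕ) : ℚ) = (q : ℚ) - 2 * ℓ + 1 := by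
    rw [Nat.cast_sub (by omega), Nat.cast_sub (by omega)]
    push_cast
    ring
  have hsub2 : ((2 * ℓ - 1 : ℕ) : ℚ) = 2 * (ℓ : ℚ) - 1 := by
    rw [Nat.cast_sub (by omega)]
    push_cast
    ring
  have E1q : ((n1 : ℚ) + n0) * q = (q.choose (2 * ℓ + 1) : ℚ) := by exact_mod_cast E1
  have E2q : ((a : ℚ) + b) * q = (q.choose (2 * ℓ - 1) : ℚ) := by exact_mod_cast E2
  have E3q : ((q - 1).choose (2 * ℓ - 1) : ℚ)
      = a + ((q : ℚ) - 2 * ℓ + 1) * b + 2 * ℓ * n0 := by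
    rw [← hsub1]
    exact_mod_cast E3
  have E4q : (q : ℚ) * (q.choose (2 * ℓ - 1) : ℚ)
      = q * ((q - 1).choose (2 * ℓ - 1) : ℚ) + (2 * (ℓ : ℚ) - 1) * (q.choose (2 * ℓ - 1) : ℚ) := by
    rw [← hsub2]
    exact_mod_cast E4
  have hq0 : (q : ℚ) ≠ 0 := by positivity
  have hl0 : (ℓ : ℚ) ≠ 0 := Nat.cast_ne_zero.mpr (by omega)
  have hkey : (q : ℚ) * (((q : ℚ) - 2 * ℓ) * a) = (q : ℚ) * (2 * ℓ * n0) := by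
    linear_combination (q : ℚ) * E3q + E4q + ((q : ℚ) - 2 * ℓ + 1) * E2q
  have key : ((q : ℚ) - 2 * ℓ) * a = 2 * ℓ * n0 := mul_left_cancel₀ hq0 hkey
  have hqQ : ((2 : ℚ)) ^ m = (q : ℚ) := by rw [hq]; push_cast; ring
  rw [hqQ]
  have hdiv : ((q : ℚ) - 2 * ℓ) / (2 * ℓ) * a = n0 := by
    rw [div_mul_eq_mul_div, key, mul_div_assoc, mul_comm (2 : ℚ) (ℓ : ℚ)]
    field_simp
  rw [hdiv]
  field_simp
  exact E1q
end

section
/- Let m ≥ 3 and let ℓ ≥ 2 be an integer with 2ℓ < 2^m−1. Then N(2ℓ, 0, F_{2^m}^*) = ((2^m−2ℓ)/(2ℓ))·N(2ℓ−1, 0, F_{2^m}^*). -/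
open Finset

theorem stmt14 (m ℓ : ℕ) (hm : 3 ≤ m) (hℓ : 2 ≤ ℓ) (hlt : 2 * ℓ < 2 ^ m - 1)
    (F : Type*) [Field F] [Fintype F] [DecidableEq F]
    (hcard : Fintype.card F = 2 ^ m) :
    (Nsub (2 * ℓ) ({0}ᶜ : Finset F) : ℚ) =
      (((2 : ℚ) ^ m - 2 * (ℓ : ℚ)) / (2 * (ℓ : ℚ))) * (Nsub (2 * ℓ - 1) ({0}ᶜ : Finset F) : ℚ) := by
  classical
  -- F has characteristic 2
  haveI hrc : CharP F (ringChar F) := ringChar.charP F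
  have hpp : (ringChar F).Prime := CharP.char_is_prime F (ringChar F)
  haveI : Fact (ringChar F).Prime := ⟨hpp⟩
  obtain ⟨n, -, hn⟩ := FiniteField.card F (ringChar F)
  have hp2 : ringChar F = 2 := by
    have h1 : ringChar F ∣ 2 ^ m := by
      rw [← hcard, hn]; exact dvd_pow_self _ n.pos.ne'
    exact (Nat.prime_dvd_prime_iff_eq hpp Nat.prime_two).mp (hpp.dvd_of_dvd_pow h1)
  haveI h2 : CharP F 2 := hp2 ▸ hrc
  have hsq : ∀ x : F, x + x = 0 := fun x => CharTwo.add_self_eq_zero x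
  have h2n : ∀ (k : ℕ) (x : F), (2 * k) • x = 0 := by
    intro k x
    rw [mul_nsmul, two_nsmul, hsq, smul_zero]
  have hadd : ∀ x : F, Function.Injective (· + x) := fun x a b h => by
    simpa using congrArg (· + x) h
  set D : Finset F := {0}ᶜ with hD
  have hmemD : ∀ x : F, x ∈ D ↔ x ≠ 0 := by
    intro x; simp [hD]
  have hDcard : D.card = 2 ^ m - 1 := by
    rw [hD, card_compl, card_singleton, hcard]
  set P1 : Finset (Finset F) :=
    (D.powersetCard (2 * ℓ - 1)).filter (fun s => s.sum id = 0) with hP1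
  set P2 : Finset (Finset F) :=
    (D.powersetCard (2 * ℓ)).filter (fun s => s.sum id = 0) with hP2
  have hmemP1 : ∀ A : Finset F, A ∈ P1 ↔ A ⊆ D ∧ A.card = 2 * ℓ - 1 ∧ A.sum id = 0 := by
    intro A; simp [hP1, Finset.mem_powersetCard, and_assoc]
  have hmemP2 : ∀ A : Finset F, A ∈ P2 ↔ A ⊆ D ∧ A.card = 2 * ℓ ∧ A.sum id = 0 := by
    intro A; simp [hP2, Finset.mem_powersetCard, and_assoc]
  -- the two sigma sets
  set S1 : Finset ((_ : Finset F) × F) := P1.sigma (fun A => D \ A) with hS1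
  set S2 : Finset ((_ : Finset F) × F) := P2.sigma (fun B => B) with hS2
  have hbij : S1.card = S2.card := by
    apply Finset.card_nbij'
      (fun q => ⟨insert q.2 (q.1.image (· + q.2)), q.2⟩)
      (fun q => ⟨(q.1.image (· + q.2)).erase 0, q.2⟩)
    · rintro ⟨A, x⟩ hq
      rw [hS1, Finset.mem_coe, Finset.mem_sigma] at hq
      obtain ⟨hA, hx⟩ := hq
      rw [hmemP1] at hA
      obtain ⟨hAD, hAcard, hAsum⟩ := hA
      rw [Finset.mem_sdiff] at hx
      obtain ⟨hxD, hxA⟩ := hx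
      dsimp only at hAD hAcard hAsum hxD hxA
      have hx0 : x ≠ 0 := (hmemD x).mp hxD
      have hxim : x ∉ A.image (· + x) := by
        simp only [Finset.mem_image, not_exists, not_and]
        intro a ha hax
        have ha0 : a = 0 := by
          have h' : a + x + x = x + x := by rw [hax]
          rwa [add_assoc, hsq, add_zero] at h'
        exact ((hmemD a).mp (hAD ha)) ha0
      rw [Finset.mem_coe, Finset.mem_sigma]
      dsimp only
      constructor
      · rw [hmemP2]
        refine ⟨?_, ?_, ?_⟩
        · intro y hy
          rw [Finset.mem_insert] at hy
          rcases hy with rfl | hy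
          · exact hxD
          · rw [Finset.mem_image] at hy
            obtain ⟨a, ha, rfl⟩ := hy
            rw [hmemD]
            intro h0
            have : a = x := by
              have h' : a + x + x = 0 + x := by rw [h0]
              rwa [add_assoc, hsq, add_zero, zero_add] at h'
            exact hxA (this ▸ ha)
        · rw [Finset.card_insert_of_notMem hxim,
            Finset.card_image_of_injective _ (hadd x), hAcard]
          omega
        · rw [Finset.sum_insert hxim, Finset.sum_image (fun a _ b _ h => hadd x h)]
          simp only [id]
          have hAsum' : ∑ a ∈ A, a = 0 := hAsum
          rw [Finset.sum_add_distrib, hAsum', zero_add, Finset.sum_const, hAcard]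
          have : (2 * ℓ - 1) • x = x := by
            have h1 : 2 * ℓ - 1 = 2 * (ℓ - 1) + 1 := by omega
            rw [h1, add_nsmul, h2n, zero_add, one_nsmul]
          rw [this, hsq]
      · exact Finset.mem_insert_self _ _
    · rintro ⟨B, x⟩ hq
      rw [hS2, Finset.mem_coe, Finset.mem_sigma] at hq
      obtain ⟨hB, hx⟩ := hq
      rw [hmemP2] at hB
      obtain ⟨hBD, hBcard, hBsum⟩ := hB
      dsimp only at hBD hBcard hBsum hx
      have hx0 : x ≠ 0 := (hmemD x).mp (hBD hx)
      have h0im : (0 : F) ∈ B.image (· + x) := by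
        rw [Finset.mem_image]; exact ⟨x, hx, hsq x⟩
      rw [Finset.mem_coe, Finset.mem_sigma]
      dsimp only
      constructor
      · rw [hmemP1]
        refine ⟨?_, ?_, ?_⟩
        · intro y hy
          rw [Finset.mem_erase] at hy
          exact (hmemD y).mpr hy.1
        · rw [Finset.card_erase_of_mem h0im,
            Finset.card_image_of_injective _ (hadd x), hBcard]
        · rw [Finset.sum_erase (f := id) _ rfl,
            Finset.sum_image (fun a _ b _ h => hadd x h)]
          simp only [id]
          have hBsum' : ∑ a ∈ B, a = 0 := hBsum
          rw [Finset.sum_add_distrib, hBsum', zero_add, Finset.sum_const, hBcard, h2n]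
      · rw [Finset.mem_sdiff]
        refine ⟨hBD hx, ?_⟩
        rw [Finset.mem_erase]
        rintro ⟨-, hmem⟩
        rw [Finset.mem_image] at hmem
        obtain ⟨b, hb, hbx⟩ := hmem
        have : b = 0 := by
          have : b + x + x = x + x := by rw [hbx]
          rwa [add_assoc, hsq, add_zero] at this
        exact ((hmemD b).mp (hBD hb)) this
    · rintro ⟨A, x⟩ hq
      rw [hS1, Finset.mem_coe, Finset.mem_sigma] at hq
      obtain ⟨hA, hx⟩ := hq
      rw [hmemP1] at hA
      rw [Finset.mem_sdiff] at hx
      dsimp only at hA hx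
      have h0A : (0 : F) ∉ A := fun h => ((hmemD 0).mp (hA.1 h)) rfl
      simp only
      congr 1
      rw [Finset.image_insert, hsq, Finset.image_image]
      have himid : A.image ((· + x) ∘ (· + x)) = A := by
        have : ((· + x) ∘ (· + x)) = (id : F → F) := by
          funext a; simp [Function.comp, add_assoc, hsq]
        rw [this, Finset.image_id]
      rw [himid, Finset.erase_insert h0A]
    · rintro ⟨B, x⟩ hq
      rw [hS2, Finset.mem_coe, Finset.mem_sigma] at hq
      obtain ⟨hB, hx⟩ := hq
      dsimp only at hB hx
      simp only
      congr 1
      rw [Finset.image_erase (hadd x), zero_add]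
      rw [Finset.image_image]
      have himid : B.image ((· + x) ∘ (· + x)) = B := by
        have : ((· + x) ∘ (· + x)) = (id : F → F) := by
          funext a; simp [Function.comp, add_assoc, hsq]
        rw [this, Finset.image_id]
      rw [himid]
      rw [Finset.insert_erase hx]
  -- compute the two cardinalities
  have hc1 : S1.card = P1.card * (2 ^ m - 2 * ℓ) := by
    rw [hS1, Finset.card_sigma]
    rw [Finset.sum_congr rfl (fun A hA => ?_), Finset.sum_const, smul_eq_mul]
    rw [hmemP1] at hA
    rw [Finset.card_sdiff_of_subset hA.1, hDcard, hA.2.1]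
    omega
  have hc2 : S2.card = P2.card * (2 * ℓ) := by
    rw [hS2, Finset.card_sigma]
    rw [Finset.sum_congr rfl (fun B hB => ?_), Finset.sum_const, smul_eq_mul]
    rw [hmemP2] at hB
    exact hB.2.1
  have key : P2.card * (2 * ℓ) = P1.card * (2 ^ m - 2 * ℓ) := by
    rw [← hc1, ← hc2, hbij]
  have hN2 : Nsub (2 * ℓ) ({0}ᶜ : Finset F) = P2.card := rfl
  have hN1 : Nsub (2 * ℓ - 1) ({0}ᶜ : Finset F) = P1.card := rfl
  rw [hN1, hN2]
  have hle : 2 * ℓ ≤ 2 ^ m := by omega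
  have hkeyQ : (P2.card : ℚ) * (2 * ℓ) = (P1.card : ℚ) * (2 ^ m - 2 * ℓ) := by
    have := congrArg (fun k : ℕ => (k : ℚ)) key
    push_cast [Nat.cast_sub hle] at this
    convert this using 2 <;> push_cast <;> ring
  have hℓ0 : (2 * (ℓ:ℚ)) ≠ 0 := by
    have : (2:ℚ) ≤ (ℓ:ℚ) := by exact_mod_cast hℓ
    exact ne_of_gt (by linarith)
  field_simp
  linarith [hkeyQ]
end

section
/- Let m ≥ 3 and let ℓ ≥ 2 be an integer with 2ℓ < 2^m−1. Then N(2ℓ, 0, F_{2^m}^*) = ((2^m−2ℓ)/(2^{m+1}·ℓ))·Σ_{t=0}^{ℓ−2} (−1)^t · ( Π_{j=0}^{t−1} (2^m − 2(ℓ−j−1))/(2(ℓ−j−1)) ) · binom(2^m, 2ℓ−1−2t), where the empty product (t = 0) is interpreted as 1. -/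
open Finset Polynomial

def Nfull (F : Type*) [DecidableEq F] [AddCommMonoid F] [Fintype F] (k : ℕ) (s : F) : ℕ :=
  ((Finset.univ.powersetCard k).filter fun A => A.sum id = s).card

section Aux
variable {F : Type*} [Field F] [Fintype F] [DecidableEq F]

lemma Nfull_succ_split (k : ℕ) :
    Nfull F (k+1) (0 : F) = Nsub (k+1) ({0}ᶜ : Finset F) + Nsub k ({0}ᶜ : Finset F) := by
  classical
  set T := (univ.powersetCard (k+1)).filter fun A : Finset F => A.sum id = 0 with hT
  have h1 : Nsub (k+1) ({0}ᶜ : Finset F) = (T.filter fun A => (0:F) ∉ A).card := by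
    unfold Nsub
    congr 1
    ext A
    simp only [hT, mem_filter, mem_powersetCard, mem_powersetCard_univ, Finset.mem_compl,
      Finset.mem_singleton, Finset.subset_iff]
    constructor
    · rintro ⟨⟨hsub, hc⟩, hs⟩
      exact ⟨⟨⟨fun x _ => Finset.mem_univ x, hc⟩, hs⟩, fun h0 => hsub h0 rfl⟩
    · rintro ⟨⟨⟨_, hc⟩, hs⟩, h0⟩
      exact ⟨⟨fun x hx hx0 => h0 (hx0 ▸ hx), hc⟩, hs⟩
  have h2 : Nsub k ({0}ᶜ : Finset F) = (T.filter fun A => (0:F) ∈ A).card := by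
    unfold Nsub
    apply Finset.card_nbij' (fun B => insert 0 B) (fun A => A.erase 0)
    · intro B hB
      simp only [Finset.mem_coe, mem_filter, mem_powersetCard, Finset.mem_compl, Finset.mem_singleton,
        Finset.subset_iff] at hB
      obtain ⟨⟨hsub, hc⟩, hs⟩ := hB
      have h0 : (0:F) ∉ B := fun h => hsub h rfl
      simp only [Finset.mem_coe, hT, mem_filter, mem_powersetCard_univ]
      refine ⟨⟨by rw [Finset.card_insert_of_notMem h0, hc], ?_⟩, Finset.mem_insert_self _ _⟩
      rw [Finset.sum_insert h0, hs, add_zero]; rfl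
    · intro A hA
      simp only [Finset.mem_coe, hT, mem_filter, mem_powersetCard_univ] at hA
      obtain ⟨⟨hc, hs⟩, h0⟩ := hA
      simp only [Finset.mem_coe, mem_filter, mem_powersetCard]
      refine ⟨⟨?_, by rw [Finset.card_erase_of_mem h0, hc]; omega⟩, ?_⟩
      · intro x hx
        simp only [Finset.mem_compl, Finset.mem_singleton]
        intro hx0
        exact (Finset.notMem_erase (0:F) A) (hx0 ▸ hx)
      · have h5 := Finset.add_sum_erase A id h0
        simp only [id] at h5 hs ⊢
        rw [zero_add] at h5
        exact h5.trans hs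
    · intro B hB
      simp only [Finset.mem_coe, mem_filter, mem_powersetCard, Finset.subset_iff, Finset.mem_compl,
        Finset.mem_singleton] at hB
      exact Finset.erase_insert (fun h => hB.1.1 h rfl)
    · intro A hA
      simp only [Finset.mem_coe, mem_filter] at hA
      exact Finset.insert_erase hA.2
  have h3 := Finset.card_filter_add_card_filter_not
    (s := T) (p := fun A : Finset F => (0:F) ∈ A)
  have h4 : Nfull F (k+1) (0:F) = T.card := rfl
  omega

lemma sum_Nfull (k : ℕ) : ∑ s : F, Nfull F k s = (Fintype.card F).choose k := by
  classical
  rw [← Finset.card_univ, ← Finset.card_powersetCard]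
  exact (Finset.card_eq_sum_card_fiberwise (f := fun A : Finset F => A.sum id)
    (fun A _ => Finset.mem_univ _)).symm

set_option linter.unusedSectionVars false in
lemma image_add_sum (c : F) (A : Finset F) :
    ((A.image (· + c)).sum id) = A.sum id + A.card • c := by
  rw [Finset.sum_image (fun x _ y _ h => by simpa using h)]
  simp [Finset.sum_add_distrib]

set_option linter.unusedSectionVars false in
lemma odd_smul_eq (h2 : ∀ x : F, x + x = 0) {k : ℕ} (hk : Odd k) (c : F) : k • c = c := by
  obtain ⟨j, rfl⟩ := hk
  rw [add_nsmul, one_nsmul, mul_nsmul, two_nsmul, h2]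
  simp

lemma Nfull_translate (h2 : ∀ x : F, x + x = 0) {k : ℕ} (hk : Odd k) (s c : F) :
    Nfull F k s = Nfull F k (s + c) := by
  classical
  unfold Nfull
  apply Finset.card_nbij' (fun A => A.image (· + c)) (fun B => B.image (· + (-c)))
  · intro A hA
    simp only [Finset.mem_coe, mem_filter, mem_powersetCard_univ] at hA ⊢
    refine ⟨by rw [Finset.card_image_of_injective _ (fun x y h => by simpa using h), hA.1], ?_⟩
    rw [image_add_sum, hA.1, hA.2, odd_smul_eq h2 hk]
  · intro B hB
    simp only [Finset.mem_coe, mem_filter, mem_powersetCard_univ] at hB ⊢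
    refine ⟨by rw [Finset.card_image_of_injective _ (fun x y h => by simpa using h), hB.1], ?_⟩
    rw [image_add_sum, hB.1, hB.2, odd_smul_eq h2 hk]
    abel
  · intro A _
    dsimp only
    rw [Finset.image_image]
    have : ((· + (-c)) ∘ (· + c)) = id := by funext x; simp
    rw [this, Finset.image_id]
  · intro B _
    dsimp only
    rw [Finset.image_image]
    have : ((· + c) ∘ (· + (-c))) = id := by funext x; simp
    rw [this, Finset.image_id]

lemma Nfull_scale (k : ℕ) {c : F} (hc : c ≠ 0) (s : F) :
    Nfull F k (c * s) = Nfull F k s := by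
  classical
  unfold Nfull
  symm
  apply Finset.card_nbij' (fun A => A.image (c * ·)) (fun B => B.image (c⁻¹ * ·))
  · intro A hA
    simp only [Finset.mem_coe, mem_filter, mem_powersetCard_univ] at hA ⊢
    refine ⟨by rw [Finset.card_image_of_injective _ (mul_right_injective₀ hc), hA.1], ?_⟩
    rw [Finset.sum_image (fun x _ y _ h => mul_right_injective₀ hc h)]
    simp only [id]
    rw [← Finset.mul_sum]
    have := hA.2
    simp only [id] at this
    rw [this]
  · intro B hB
    simp only [Finset.mem_coe, mem_filter, mem_powersetCard_univ] at hB ⊢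
    refine ⟨by rw [Finset.card_image_of_injective _ (mul_right_injective₀ (inv_ne_zero hc)),
      hB.1], ?_⟩
    rw [Finset.sum_image (fun x _ y _ h => mul_right_injective₀ (inv_ne_zero hc) h)]
    simp only [id]
    rw [← Finset.mul_sum]
    have := hB.2
    simp only [id] at this
    rw [this, ← mul_assoc, inv_mul_cancel₀ hc, one_mul]
  · intro A _
    dsimp only
    rw [Finset.image_image]
    have : ((c⁻¹ * ·) ∘ (c * ·)) = id := by
      funext x; simp [← mul_assoc, inv_mul_cancel₀ hc]
    rw [this, Finset.image_id]
  · intro B _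
    dsimp only
    rw [Finset.image_image]
    have : ((c * ·) ∘ (c⁻¹ * ·)) = id := by
      funext x; simp [← mul_assoc, mul_inv_cancel₀ hc]
    rw [this, Finset.image_id]

lemma Nfull_odd (h2 : ∀ x : F, x + x = 0) {k : ℕ} (hk : Odd k) :
    Fintype.card F * Nfull F k 0 = (Fintype.card F).choose k := by
  have h : ∀ s : F, Nfull F k s = Nfull F k 0 := fun s => by
    have := Nfull_translate h2 hk 0 s
    rw [zero_add] at this
    exact this.symm
  have hs := sum_Nfull (F := F) k
  rw [Finset.sum_congr rfl (fun s _ => h s), Finset.sum_const, Finset.card_univ,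
    smul_eq_mul] at hs
  exact hs


lemma coeff_sq_add_C_pow (c : ℚ) (n k : ℕ) (hk : k ≤ n) :
    (((X : ℚ[X])^2 + C c)^n).coeff (2*k) = (n.choose k : ℚ) * c^(n-k) := by
  rw [add_pow, Polynomial.finset_sum_coeff]
  have hterm : ∀ i, ((((X:ℚ[X])^2)^i * (C c)^(n-i) * ((n.choose i : ℕ) : ℚ[X])).coeff (2*k))
      = (if 2*k = 2*i then 1 else 0) * c^(n-i) * (n.choose i : ℚ) := by
    intro i
    rw [← Polynomial.C_eq_natCast, Polynomial.coeff_mul_C, ← map_pow, Polynomial.coeff_mul_C,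
      ← pow_mul, Polynomial.coeff_X_pow]
  rw [Finset.sum_congr rfl (fun i _ => hterm i)]
  rw [Finset.sum_eq_single k]
  · simp
    ring
  · intro i _ hne
    have : ¬ (2*k = 2*i) := by omega
    simp [this]
  · intro h
    exact absurd (Finset.mem_range.mpr (Nat.lt_succ_of_le hk)) h







lemma Nfull_even {n : ℕ} (hn : Fintype.card F = 2 * n)
    (φ : F →+ ZMod 2) (hfib : (univ.filter fun x : F => φ x = 1).card = n)
    (ℓ : ℕ) (hl : ℓ ≤ n) :
    ((Fintype.card F : ℚ)) * Nfull F (2*ℓ) 0 =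
      ((Fintype.card F).choose (2*ℓ) : ℚ)
        + ((Fintype.card F : ℚ) - 1) * (-1)^ℓ * (n.choose ℓ) := by
  classical
  set q := Fintype.card F with hq
  set ε : F → ℚ := fun x => (-1 : ℚ)^((φ x).val) with hε
  have hiff : ∀ u : ZMod 2, (¬ u = 0) ↔ u = 1 := by decide
  have hfilter_eq : (univ.filter fun x : F => ¬ φ x = 0)
      = (univ.filter fun x : F => φ x = 1) :=
    Finset.filter_congr (fun x _ => hiff (φ x))
  have hfib0 : (univ.filter fun x : F => φ x = 0).card = n := by
    have h := Finset.card_filter_add_card_filter_not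
      (s := (univ : Finset F)) (p := fun x : F => φ x = 0)
    rw [Finset.card_univ, ← hq, hfilter_eq, hfib, hn] at h
    omega
  have hval0 : ((0 : ZMod 2)).val = 0 := rfl
  have hval1 : ((1 : ZMod 2)).val = 1 := rfl
  have hmul : ∀ u v : ZMod 2, ((-1:ℚ))^((u+v).val) = (-1)^(u.val) * (-1)^(v.val) := by
    intro u v
    rw [ZMod.val_add, ← pow_add, ← neg_one_pow_eq_pow_mod_two]
  have hprod : ∀ A : Finset F, (∏ x ∈ A, ε x) = (-1 : ℚ)^((φ (A.sum id)).val) := by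
    intro A
    induction A using Finset.induction_on with
    | empty => simp [hε]
    | insert _ _ ha ih =>
      rw [Finset.prod_insert ha, Finset.sum_insert ha, id_eq, map_add, hmul, ih]
  -- signed sum over subsets = sum over fibers
  have hss : (∑ A ∈ (univ : Finset F).powersetCard (2*ℓ), ∏ x ∈ A, ε x)
      = ∑ s : F, ((-1:ℚ)^((φ s).val)) * (Nfull F (2*ℓ) s : ℚ) := by
    rw [← Finset.sum_fiberwise_of_maps_to
      (g := fun A : Finset F => A.sum id) (t := univ)
      (fun A _ => Finset.mem_univ _) (fun A => ∏ x ∈ A, ε x)]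
    refine Finset.sum_congr rfl (fun s _ => ?_)
    rw [Finset.sum_congr rfl (fun A hA => by
      rw [hprod A, (Finset.mem_filter.mp hA).2])]
    rw [Finset.sum_const, nsmul_eq_mul, mul_comm]
    rfl
  -- Vieta
  have h2l : 2*ℓ ≤ q := by omega
  have hv := Finset.prod_X_add_C_coeff (univ : Finset F) (fun x => ε x)
    (k := q - 2*ℓ) (by rw [Finset.card_univ]; omega)
  rw [Finset.card_univ, ← hq] at hv
  have h6 : q - (q - 2*ℓ) = 2*ℓ := by omega
  rw [h6] at hv
  -- product evaluation
  have hsplitprod : (∏ x : F, ((X : ℚ[X]) + C (ε x))) = ((X:ℚ[X])^2 + C (-1:ℚ))^n := by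
    rw [← Finset.prod_filter_mul_prod_filter_not univ (fun x : F => φ x = 0)]
    have e0 : ∀ x ∈ univ.filter (fun x : F => φ x = 0),
        (X:ℚ[X]) + C (ε x) = X + C (1:ℚ) := by
      intro x hx
      simp only [Finset.mem_filter] at hx
      simp [hε, hx.2, hval0]
    have e1 : ∀ x ∈ univ.filter (fun x : F => ¬ φ x = 0),
        (X:ℚ[X]) + C (ε x) = X + C (-1:ℚ) := by
      intro x hx
      simp only [Finset.mem_filter] at hx
      have h1 : φ x = 1 := (hiff _).mp hx.2
      simp [hε, h1, hval1]
    rw [Finset.prod_congr rfl e0, Finset.prod_congr rfl e1, Finset.prod_const,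
      Finset.prod_const, hfib0, hfilter_eq, hfib, ← mul_pow]
    congr 1
    simp only [map_one, map_neg]
    ring
  have hcoeffval : (∑ A ∈ (univ : Finset F).powersetCard (2*ℓ), ∏ x ∈ A, ε x)
      = (-1:ℚ)^ℓ * (n.choose ℓ : ℚ) := by
    rw [← hv, hsplitprod]
    have h7 : q - 2*ℓ = 2*(n-ℓ) := by omega
    rw [h7, coeff_sq_add_C_pow _ _ _ (Nat.sub_le n ℓ)]
    rw [Nat.choose_symm hl]
    have h8 : n - (n - ℓ) = ℓ := by omega
    rw [h8]
    ring
  -- chi sums to zero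
  have hsumchi : (∑ s : F, ((-1:ℚ)^((φ s).val))) = 0 := by
    rw [← Finset.sum_filter_add_sum_filter_not univ (fun x : F => φ x = 0)]
    have hA : (∑ x ∈ univ.filter (fun x : F => φ x = 0), ((-1:ℚ)^((φ x).val))) = n := by
      rw [Finset.sum_eq_card_nsmul (fun x hx => by
        simp only [Finset.mem_filter] at hx
        rw [hx.2, hval0, pow_zero]), hfib0]
      simp
    have hB : (∑ x ∈ univ.filter (fun x : F => ¬ φ x = 0), ((-1:ℚ)^((φ x).val))) = -(n:ℚ) := by
      rw [Finset.sum_eq_card_nsmul (fun x hx => by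
        simp only [Finset.mem_filter] at hx
        rw [(hiff _).mp hx.2, hval1, pow_one]), hfilter_eq, hfib]
      simp
    rw [hA, hB]
    ring
  have hchi0 : ((-1:ℚ)^((φ (0:F)).val)) = 1 := by rw [map_zero, hval0, pow_zero]
  -- N s = N 1 for s ≠ 0
  have hN1 : ∀ s : F, s ≠ 0 → Nfull F (2*ℓ) s = Nfull F (2*ℓ) 1 := by
    intro s hs
    have := Nfull_scale (F := F) (2*ℓ) hs (1 : F)
    rwa [mul_one] at this
  -- split sums at 0
  have hsplit1 : ∑ s : F, ((-1:ℚ)^((φ s).val)) * (Nfull F (2*ℓ) s : ℚ)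
      = (Nfull F (2*ℓ) (0:F) : ℚ) - (Nfull F (2*ℓ) (1:F) : ℚ) := by
    rw [← Finset.add_sum_erase univ _ (Finset.mem_univ (0:F))]
    rw [hchi0, one_mul]
    have he : ∀ s ∈ univ.erase (0:F), ((-1:ℚ)^((φ s).val)) * (Nfull F (2*ℓ) s : ℚ)
        = ((-1:ℚ)^((φ s).val)) * (Nfull F (2*ℓ) (1:F) : ℚ) := by
      intro s hs
      rw [hN1 s (Finset.ne_of_mem_erase hs)]
    rw [Finset.sum_congr rfl he, ← Finset.sum_mul]
    have hsume : (∑ s ∈ univ.erase (0:F), ((-1:ℚ)^((φ s).val))) = -1 := by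
      rw [Finset.sum_erase_eq_sub (Finset.mem_univ (0:F)), hsumchi, hchi0]
      ring
    rw [hsume]
    ring
  have hsplit2 : ((q.choose (2*ℓ) : ℚ))
      = (Nfull F (2*ℓ) (0:F) : ℚ) + ((q:ℚ) - 1) * (Nfull F (2*ℓ) (1:F) : ℚ) := by
    have h := sum_Nfull (F := F) (2*ℓ)
    have hcast : (∑ s : F, (Nfull F (2*ℓ) s : ℚ)) = ((q.choose (2*ℓ) : ℚ)) := by
      rw [← Nat.cast_sum, h]
    rw [← hcast, ← Finset.add_sum_erase univ _ (Finset.mem_univ (0:F))]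
    have he : ∀ s ∈ univ.erase (0:F), ((Nfull F (2*ℓ) s : ℚ))
        = (Nfull F (2*ℓ) (1:F) : ℚ) := by
      intro s hs
      rw [hN1 s (Finset.ne_of_mem_erase hs)]
    rw [Finset.sum_congr rfl he, Finset.sum_const, nsmul_eq_mul]
    have hcarde : ((univ.erase (0:F)).card : ℚ) = (q:ℚ) - 1 := by
      rw [Finset.card_erase_of_mem (Finset.mem_univ _), Finset.card_univ]
      have hq1 : 1 ≤ Fintype.card F := Fintype.card_pos
      push_cast [hq1]
      ring
    rw [hcarde]
  -- conclude
  have key : (Nfull F (2*ℓ) (0:F) : ℚ) - (Nfull F (2*ℓ) (1:F) : ℚ)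
      = (-1:ℚ)^ℓ * (n.choose ℓ : ℚ) := by
    rw [← hsplit1, ← hss, hcoeffval]
  linear_combination ((q:ℚ) - 1) * key - hsplit2


set_option linter.unusedSectionVars false in
lemma exists_phi (m : ℕ) (hm : 1 ≤ m) (hcard : Fintype.card F = 2^m)
    (h2 : ∀ x : F, x + x = 0) :
    ∃ φ : F →+ ZMod 2, (univ.filter fun x : F => φ x = 1).card = 2^(m-1) := by
  haveI : Fact (Nat.Prime 2) := ⟨Nat.prime_two⟩
  letI : Module (ZMod 2) F := AddCommGroup.zmodModule (fun x => by
    rw [two_nsmul]; exact h2 x)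
  let b := Module.Basis.ofVectorSpace (ZMod 2) F
  obtain ⟨i⟩ := b.index_nonempty
  refine ⟨(b.coord i).toAddMonoidHom, ?_⟩
  have hφb : b.coord i (b i) = 1 := by simp [Module.Basis.coord_apply]
  have hcoe : ∀ x : F, (b.coord i).toAddMonoidHom x = b.coord i x := fun _ => rfl
  have h11 : (1 : ZMod 2) + 1 = 0 := rfl
  have hbij : (univ.filter fun x : F => b.coord i x = 1).card
      = (univ.filter fun x : F => b.coord i x = 0).card := by
    apply Finset.card_nbij' (fun x => x + b i) (fun x => x + b i)
    · intro x hx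
      simp only [Finset.mem_coe, Finset.mem_filter, Finset.mem_univ, true_and] at hx ⊢
      rw [map_add, hx, hφb, h11]
    · intro x hx
      simp only [Finset.mem_coe, Finset.mem_filter, Finset.mem_univ, true_and] at hx ⊢
      rw [map_add, hx, hφb, zero_add]
    · intro x _
      dsimp only
      rw [add_assoc, h2, add_zero]
    · intro x _
      dsimp only
      rw [add_assoc, h2, add_zero]
  have hnot : (univ.filter fun x : F => ¬ b.coord i x = 1)
      = (univ.filter fun x : F => b.coord i x = 0) := by
    refine Finset.filter_congr (fun x _ => ?_)
    have : ∀ u : ZMod 2, (¬ u = 1) ↔ u = 0 := by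
      exact (by decide : ∀ u : Fin 2, (¬ u = 1) ↔ u = 0)
    exact this _
  have htot := Finset.card_filter_add_card_filter_not
    (s := (univ : Finset F)) (p := fun x : F => b.coord i x = 1)
  rw [Finset.card_univ, hcard, hnot, ← hbij] at htot
  have hpow : 2^m = 2 * 2^(m-1) := by
    rw [← pow_succ']
    congr 1
    omega
  simp only [hcoe]
  omega
set_option linter.unusedSectionVars false in
lemma Nsub_zero (D : Finset F) : Nsub 0 D = 1 := by
  rw [Nsub, Finset.powersetCard_zero, Finset.filter_singleton]
  simp

lemma propA (m : ℕ) (hm : 1 ≤ m) (hcard : Fintype.card F = 2^m)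
    (h2 : ∀ x : F, x + x = 0) :
    ∀ ℓ : ℕ, 2*ℓ ≤ 2^m →
      ((2:ℚ)^m) * (Nsub (2*ℓ) ({0}ᶜ : Finset F) : ℚ)
        = (((2^m - 1).choose (2*ℓ) : ℕ) : ℚ)
          + ((2:ℚ)^m - 1) * (-1)^ℓ * (((2^(m-1) - 1).choose ℓ : ℕ) : ℚ) := by
  obtain ⟨φ, hφ⟩ := exists_phi m hm hcard h2
  set q : ℕ := 2^m with hqdef
  set n : ℕ := 2^(m-1) with hndef
  have hq2n : q = 2 * n := by
    rw [hqdef, hndef, ← pow_succ']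
    congr 1
    omega
  have hn1 : 1 ≤ n := Nat.one_le_two_pow
  have hQ : ((2:ℚ)^m) = (q : ℚ) := by push_cast [hqdef]; ring
  intro ℓ
  induction ℓ with
  | zero =>
    intro _
    rw [Nat.mul_zero, Nsub_zero]
    simp [hQ]
  | succ ℓ ih =>
    intro hle
    have hle' : 2*ℓ ≤ 2^m := by omega
    have IH := ih hle'
    have hsplit1 := Nfull_succ_split (F := F) (2*ℓ+1)
    have hsplit2 := Nfull_succ_split (F := F) (2*ℓ)
    have hodd := Nfull_odd (F := F) h2 (k := 2*ℓ+1) ⟨ℓ, by ring⟩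
    have hl1 : ℓ + 1 ≤ n := by omega
    have heven := Nfull_even (hcard.trans hq2n) φ hφ (ℓ+1) hl1
    rw [hcard] at hodd heven
    -- rewrite everything over ℚ
    have h1Q : (Nfull F (2*ℓ+2) (0:F) : ℚ)
        = (Nsub (2*ℓ+2) ({0}ᶜ : Finset F) : ℚ) + (Nsub (2*ℓ+1) ({0}ᶜ : Finset F) : ℚ) := by
      have : 2*ℓ+2 = (2*ℓ+1)+1 := rfl
      rw [this]
      exact_mod_cast congrArg (Nat.cast : ℕ → ℚ) hsplit1
    have h2Q : (Nfull F (2*ℓ+1) (0:F) : ℚ)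
        = (Nsub (2*ℓ+1) ({0}ᶜ : Finset F) : ℚ) + (Nsub (2*ℓ) ({0}ᶜ : Finset F) : ℚ) := by
      exact_mod_cast congrArg (Nat.cast : ℕ → ℚ) hsplit2
    have hoddQ : (q:ℚ) * (Nfull F (2*ℓ+1) (0:F) : ℚ) = (q.choose (2*ℓ+1) : ℚ) := by
      exact_mod_cast congrArg (Nat.cast : ℕ → ℚ) hodd
    have hevenQ : (q:ℚ) * (Nfull F (2*ℓ+2) (0:F) : ℚ)
        = (q.choose (2*ℓ+2) : ℚ) + ((q:ℚ) - 1) * (-1)^(ℓ+1) * (n.choose (ℓ+1) : ℚ) := by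
      have h22 : 2*(ℓ+1) = 2*ℓ+2 := by ring
      rw [← h22]
      exact heven
    -- Pascal identities over ℚ
    have hq1 : 1 ≤ q := by omega
    have hpas1 : (q.choose (2*ℓ+2) : ℚ)
        = ((q-1).choose (2*ℓ+1) : ℚ) + ((q-1).choose (2*ℓ+2) : ℚ) := by
      have : q = (q-1)+1 := by omega
      rw [this, Nat.choose_succ_succ (q-1) (2*ℓ+1)]
      push_cast
      ring
    have hpas2 : (q.choose (2*ℓ+1) : ℚ)
        = ((q-1).choose (2*ℓ) : ℚ) + ((q-1).choose (2*ℓ+1) : ℚ) := by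
      have : q = (q-1)+1 := by omega
      rw [this, Nat.choose_succ_succ (q-1) (2*ℓ)]
      push_cast
      ring
    have hpas3 : (n.choose (ℓ+1) : ℚ)
        = ((n-1).choose ℓ : ℚ) + ((n-1).choose (ℓ+1) : ℚ) := by
      have : n = (n-1)+1 := by omega
      rw [this, Nat.choose_succ_succ (n-1) ℓ]
      push_cast
      ring
    have hgoalidx : 2*(ℓ+1) = 2*ℓ+2 := by ring
    rw [hgoalidx, hQ] at *
    rw [h1Q] at hevenQ
    rw [h2Q] at hoddQ
    rw [hpas1, hpas3] at hevenQ
    rw [hpas2] at hoddQ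
    have hpow : ((-1:ℚ))^(ℓ+1) = -(-1:ℚ)^ℓ := by
      rw [pow_succ]
      ring
    rw [hpow] at hevenQ
    linear_combination hevenQ - hoddQ + IH

end Aux

lemma keyfield (X L A B Cc D E Sl P : ℚ) (hL : L ≠ 0) (hL1 : L+1 ≠ 0) (hX : X ≠ 0)
    (hXL : 2*X - 2*L ≠ 0)
    (hIH : 2*X * ((2*X - 2*L)/((2*(2*X))*L) * Sl) = A + (2*X-1)*P*D)
    (hi : Cc*(2*L+2) = B*(2*X-2*L-2))
    (hiii : E*(L+1) = D*(X-1-L)) :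
    2*X * ((2*X - 2*(L+1))/((2*(2*X))*(L+1)) * (Sl * (-((2*X-2*L)/(2*L))) + (A+B)))
      = Cc + (2*X-1)*(P*(-1))*E := by
  have hSl : (2*X-2*L)/(2*L)*Sl = A + (2*X-1)*P*D := by
    rw [← hIH]
    field_simp
  have hstep : 2*X * ((2*X - 2*(L+1))/((2*(2*X))*(L+1)) * (Sl * (-((2*X-2*L)/(2*L))) + (A+B)))
      = ((2*X-2*L-2)/(2*(L+1))) * ((A+B) - (2*X-2*L)/(2*L)*Sl) := by
    field_simp
    ring
  rw [hstep, hSl]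
  rw [div_mul_eq_mul_div, div_eq_iff (by intro hc; apply hL1; linarith)]
  linear_combination (-1)*hi + 2*(2*X-1)*P*hiii

lemma propB (m : ℕ) (hm : 1 ≤ m) :
    ∀ ℓ : ℕ, 1 ≤ ℓ → 2*ℓ < 2^m - 1 →
    ((2:ℚ)^m) * ((((2:ℚ)^m - 2*(ℓ:ℚ)) / ((2:ℚ)^(m+1) * (ℓ:ℚ))) *
      ∑ t ∈ Finset.range (ℓ-1), (-1:ℚ)^t *
        (∏ j ∈ Finset.range t,
          ((2:ℚ)^m - 2*((ℓ:ℚ)-(j:ℚ)-1)) / (2*((ℓ:ℚ)-(j:ℚ)-1))) *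
        (((2^m).choose (2*ℓ-1-2*t) : ℕ) : ℚ))
    = (((2^m-1).choose (2*ℓ) : ℕ) : ℚ)
      + ((2:ℚ)^m - 1) * (-1)^ℓ * (((2^(m-1)-1).choose ℓ : ℕ) : ℚ) := by
  have hQ2 : (2:ℚ)^m = 2 * (2:ℚ)^(m-1) := by
    rw [← pow_succ']
    congr 1
    omega
  have hq2n : (2:ℕ)^m = 2 * 2^(m-1) := by
    rw [← pow_succ']
    congr 1
    omega
  have hN0 : (2:ℚ)^(m-1) ≠ 0 := by positivity
  intro ℓ hℓ1
  induction ℓ, hℓ1 using Nat.le_induction with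
  | base =>
    intro _
    simp only [Nat.sub_self, Finset.range_zero, Finset.sum_empty, mul_zero]
    have hc2 : (((2^m-1).choose 2 : ℕ) : ℚ) = ((2:ℚ)^m - 1) * ((2:ℚ)^m - 2) / 2 := by
      rw [Nat.cast_choose_two]
      have h1 : ((2^m - 1 : ℕ) : ℚ) = (2:ℚ)^m - 1 := by
        have h : (1:ℕ) ≤ 2^m := Nat.one_le_two_pow
        push_cast [h]
        ring
      rw [h1]
      ring
    have hc1 : (((2^(m-1)-1).choose 1 : ℕ) : ℚ) = (2:ℚ)^(m-1) - 1 := by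
      rw [Nat.choose_one_right]
      have h : (1:ℕ) ≤ 2^(m-1) := Nat.one_le_two_pow
      push_cast [h]
      ring
    rw [show 2*1 = 2 from rfl, hc2, hc1, hQ2]
    push_cast
    ring
  | succ ℓ hℓ IH =>
    intro h
    have h2ℓ : 2*ℓ < 2^m - 1 := by omega
    have IH2 := IH h2ℓ
    have hℓ0 : ((ℓ:ℚ)) ≠ 0 := Nat.cast_ne_zero.mpr (by omega)
    have hidx : (ℓ+1) - 1 = ℓ := by omega
    rw [hidx]
    have hrange : Finset.range ℓ = Finset.range ((ℓ-1)+1) := by congr 1; omega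
    rw [hrange, Finset.sum_range_succ']
    have hzero : (-1:ℚ)^0 *
        (∏ j ∈ Finset.range 0,
          ((2:ℚ)^m - 2*(((ℓ+1:ℕ):ℚ)-(j:ℚ)-1)) / (2*(((ℓ+1:ℕ):ℚ)-(j:ℚ)-1))) *
        (((2^m).choose (2*(ℓ+1)-1-2*0) : ℕ) : ℚ)
        = (((2^m).choose (2*ℓ+1) : ℕ) : ℚ) := by
      rw [show 2*(ℓ+1)-1-2*0 = 2*ℓ+1 from by omega]
      simp
    have hterm : ∀ t ∈ Finset.range (ℓ-1),
        (-1:ℚ)^(t+1) *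
          (∏ j ∈ Finset.range (t+1),
            ((2:ℚ)^m - 2*(((ℓ+1:ℕ):ℚ)-(j:ℚ)-1)) / (2*(((ℓ+1:ℕ):ℚ)-(j:ℚ)-1))) *
          (((2^m).choose (2*(ℓ+1)-1-2*(t+1)) : ℕ) : ℚ)
        = ((-1:ℚ)^t *
            (∏ j ∈ Finset.range t,
              ((2:ℚ)^m - 2*((ℓ:ℚ)-(j:ℚ)-1)) / (2*((ℓ:ℚ)-(j:ℚ)-1))) *
            (((2^m).choose (2*ℓ-1-2*t) : ℕ) : ℚ))
          * (-(((2:ℚ)^m - 2*(ℓ:ℚ)) / (2*(ℓ:ℚ)))) := by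
      intro t _
      rw [Finset.prod_range_succ']
      rw [show 2*(ℓ+1)-1-2*(t+1) = 2*ℓ-1-2*t from by omega]
      have e1 : ∀ j : ℕ,
          ((2:ℚ)^m - 2*(((ℓ+1:ℕ):ℚ)-((j+1:ℕ):ℚ)-1)) / (2*(((ℓ+1:ℕ):ℚ)-((j+1:ℕ):ℚ)-1))
          = ((2:ℚ)^m - 2*((ℓ:ℚ)-(j:ℚ)-1)) / (2*((ℓ:ℚ)-(j:ℚ)-1)) := by
        intro j
        have e : (((ℓ+1:ℕ):ℚ)-((j+1:ℕ):ℚ)-1) = ((ℓ:ℚ)-(j:ℚ)-1) := by push_cast; ring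
        rw [e]
      have e0 : (((ℓ+1:ℕ):ℚ)-((0:ℕ):ℚ)-1) = (ℓ:ℚ) := by push_cast; ring
      rw [Finset.prod_congr rfl (fun j _ => e1 j), e0, pow_succ]
      ring
    rw [Finset.sum_congr rfl hterm, hzero, ← Finset.sum_mul]
    set Sl := ∑ t ∈ Finset.range (ℓ-1), (-1:ℚ)^t *
        (∏ j ∈ Finset.range t,
          ((2:ℚ)^m - 2*((ℓ:ℚ)-(j:ℚ)-1)) / (2*((ℓ:ℚ)-(j:ℚ)-1))) *
        (((2^m).choose (2*ℓ-1-2*t) : ℕ) : ℚ) with hSldef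
    -- normalize powers of two and casts
    rw [show ((ℓ+1:ℕ):ℚ) = (ℓ:ℚ)+1 from by push_cast; ring,
      show (2:ℚ)^(m+1) = 2*(2:ℚ)^m from pow_succ' 2 m, hQ2]
    rw [show (2:ℚ)^(m+1) = 2*(2:ℚ)^m from pow_succ' 2 m, hQ2] at IH2
    -- choose identities
    have hq1 : (1:ℕ) ≤ 2^m := Nat.one_le_two_pow
    have hnat2 : (2^m).choose (2*ℓ+1) = (2^m-1).choose (2*ℓ) + (2^m-1).choose (2*ℓ+1) := by
      conv_lhs => rw [show (2:ℕ)^m = (2^m-1)+1 from by omega]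
      exact Nat.choose_succ_succ _ _
    have hGcast : (((2^m).choose (2*ℓ+1) : ℕ) : ℚ)
        = (((2^m-1).choose (2*ℓ) : ℕ) : ℚ) + (((2^m-1).choose (2*ℓ+1) : ℕ) : ℚ) := by
      rw [hnat2]
      push_cast
      ring
    rw [hGcast]
    have hle22 : 2*ℓ+2 ≤ 2^m := by omega
    have hcast1 : (((2^m-1) - (2*ℓ+1) : ℕ) : ℚ) = 2*(2:ℚ)^(m-1) - 2*(ℓ:ℚ) - 2 := by
      rw [show (2^m-1) - (2*ℓ+1) = 2^m - (2*ℓ+2) from by omega, Nat.cast_sub hle22]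
      push_cast
      rw [hQ2]
      ring
    have hi : (((2^m-1).choose (2*(ℓ+1)) : ℕ) : ℚ) * (2*(ℓ:ℚ)+2)
        = (((2^m-1).choose (2*ℓ+1) : ℕ) : ℚ) * (2*(2:ℚ)^(m-1) - 2*(ℓ:ℚ) - 2) := by
      have hnat := Nat.choose_succ_right_eq (2^m-1) (2*ℓ+1)
      have hc := congrArg (Nat.cast : ℕ → ℚ) hnat
      rw [Nat.cast_mul, Nat.cast_mul, hcast1] at hc
      rw [show 2*(ℓ+1) = (2*ℓ+1)+1 from by ring]
      push_cast at hc ⊢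
      linear_combination hc
    have hlell : ℓ ≤ 2^(m-1) - 1 := by omega
    have hcast2 : (((2^(m-1)-1) - ℓ : ℕ) : ℚ) = (2:ℚ)^(m-1) - 1 - (ℓ:ℚ) := by
      rw [Nat.cast_sub hlell, Nat.cast_sub Nat.one_le_two_pow]
      push_cast
      ring
    have hiii : (((2^(m-1)-1).choose (ℓ+1) : ℕ) : ℚ) * ((ℓ:ℚ)+1)
        = (((2^(m-1)-1).choose ℓ : ℕ) : ℚ) * ((2:ℚ)^(m-1) - 1 - (ℓ:ℚ)) := by
      have hnat := Nat.choose_succ_right_eq (2^(m-1)-1) ℓ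
      have hc := congrArg (Nat.cast : ℕ → ℚ) hnat
      rw [Nat.cast_mul, Nat.cast_mul, hcast2] at hc
      push_cast at hc ⊢
      linear_combination hc
    have h2X2L : 2*(2:ℚ)^(m-1) - 2*(ℓ:ℚ) ≠ 0 := by
      have hnatlt : 2*ℓ < 2^m := by omega
      have hlt := (Nat.cast_lt (α := ℚ)).mpr hnatlt
      push_cast at hlt
      rw [hQ2] at hlt
      intro hzero'
      linarith
    have hℓ10 : ((ℓ:ℚ)+1) ≠ 0 := by positivity
    rw [pow_succ]
    exact keyfield ((2:ℚ)^(m-1)) ((ℓ:ℚ)) _ _ _ _ _ Sl ((-1:ℚ)^ℓ)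
      hℓ0 hℓ10 hN0 h2X2L IH2 hi hiii

theorem stmt16 (m ℓ : ℕ) (hm : 3 ≤ m) (hℓ : 2 ≤ ℓ) (hlt : 2 * ℓ < 2 ^ m - 1)
    (F : Type*) [Field F] [Fintype F] [DecidableEq F]
    (hcard : Fintype.card F = 2 ^ m) :
    (Nsub (2 * ℓ) ({0}ᶜ : Finset F) : ℚ) =
      (((2 : ℚ) ^ m - 2 * (ℓ : ℚ)) / ((2 : ℚ) ^ (m + 1) * (ℓ : ℚ))) *
        ∑ t ∈ Finset.range (ℓ - 1), (-1 : ℚ) ^ t *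
          (∏ j ∈ Finset.range t,
            ((2 : ℚ) ^ m - 2 * ((ℓ : ℚ) - (j : ℚ) - 1)) / (2 * ((ℓ : ℚ) - (j : ℚ) - 1))) *
          ((2 ^ m).choose (2 * ℓ - 1 - 2 * t) : ℚ) := by
  have hm1 : 1 ≤ m := by omega
  have h2 : ∀ x : F, x + x = 0 := by
    have hc : ((Fintype.card F : ℕ) : F) = 0 := FiniteField.cast_card_eq_zero F
    rw [hcard] at hc
    push_cast at hc
    have h20 : (2:F) = 0 := pow_eq_zero_iff (by omega) |>.mp hc
    intro x
    calc x + x = 2 * x := by ring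
    _ = 0 := by rw [h20, zero_mul]
  have hA := propA m hm1 hcard h2 ℓ (by omega)
  have hB := propB m hm1 ℓ (by omega) hlt
  have hQ0 : ((2:ℚ)^m) ≠ 0 := by positivity
  apply mul_left_cancel₀ hQ0
  rw [hA, hB]
end

section
/- Let m ≥ 3 and let k be an integer with 3 ≤ k < 2^m−1. If k = 2ℓ+1 is odd (ℓ ≥ 1), then N(k, 0, F_{2^m}) = (1/2^m)·binom(2^m, 2ℓ+1). If k = 2ℓ is even (ℓ ≥ 2), then N(k, 0, F_{2^m}) = (1/(2ℓ))·Σ_{t=0}^{ℓ−2} (−1)^t · ( Π_{j=0}^{t−1} (2^m − 2(ℓ−1−j))/(2(ℓ−1−j)) ) · binom(2^m, 2ℓ−1−2t), where the empty product (t = 0) is interpreted as 1. -/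
open Finset

section Aux

set_option linter.unusedSectionVars false

variable {F : Type*} [Field F] [Fintype F] [DecidableEq F]

private def Az (F : Type*) [Field F] [Fintype F] [DecidableEq F] (k : ℕ) : Finset (Finset F) :=
  ((Finset.univ : Finset F).powersetCard k).filter fun s => s.sum id = 0

private lemma mem_Az {k : ℕ} {S : Finset F} : S ∈ Az F k ↔ S.card = k ∧ S.sum id = 0 := by
  simp [Az, Finset.mem_powersetCard_univ]

private lemma nsub_eq (k : ℕ) : Nsub k (Finset.univ : Finset F) = (Az F k).card := rfl

variable [CharP F 2]

private lemma hhalf {x y : F} (h : x + y = 0) : x = y := by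
  rw [add_eq_zero_iff_eq_neg, CharTwo.neg_eq] at h; exact h

private lemma odd_count (k : ℕ) (hk : Odd k) :
    Fintype.card F * (Az F k).card = (Fintype.card F).choose k := by
  classical
  have hksmul : ∀ b : F, k • b = b := by
    intro b
    obtain ⟨t, rfl⟩ := hk
    simp [add_nsmul, mul_comm, mul_nsmul, CharTwo.two_nsmul, CharTwo.two_eq_zero]
  have himg : ∀ (s : Finset F) (b : F), ((s.image (· + b)).sum id) = s.sum id + s.card • b := by
    intro s b
    rw [Finset.sum_image (fun x _ y _ h => add_left_injective b h)]
    simp only [id]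
    rw [Finset.sum_add_distrib, Finset.sum_const]
  have hinv : ∀ (s : Finset F) (b : F), (s.image (· + b)).image (· + b) = s := by
    intro s b
    rw [Finset.image_image]
    have : ((· + b) ∘ (· + b)) = (id : F → F) := by
      funext x
      simp [add_assoc, CharTwo.add_self_eq_zero]
    rw [this, Finset.image_id]
  have hfiber : ∀ b : F,
      (((Finset.univ : Finset F).powersetCard k).filter fun s => s.sum id = b).card
        = (Az F k).card := by
    intro b
    refine Finset.card_nbij' (fun s => s.image (· + b)) (fun s => s.image (· + b))
      ?_ ?_ (fun s _ => hinv s b) (fun s _ => hinv s b)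
    · intro s hs
      simp only [Finset.mem_coe, Finset.mem_filter, Finset.mem_powersetCard_univ] at hs
      rw [Finset.mem_coe, mem_Az]
      have hc : (s.image (· + b)).card = k := by
        rw [Finset.card_image_of_injective _ (add_left_injective b), hs.1]
      refine ⟨hc, ?_⟩
      rw [himg, hs.1, hs.2, hksmul, CharTwo.add_self_eq_zero]
    · intro s hs
      rw [Finset.mem_coe, mem_Az] at hs
      simp only [Finset.mem_coe, Finset.mem_filter, Finset.mem_powersetCard_univ]
      have hc : (s.image (· + b)).card = k := by
        rw [Finset.card_image_of_injective _ (add_left_injective b), hs.1]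
      refine ⟨hc, ?_⟩
      rw [himg, hs.1, hs.2, hksmul, zero_add]
  have hpart : ((Finset.univ : Finset F).powersetCard k).card
      = ∑ b : F, (((Finset.univ : Finset F).powersetCard k).filter fun s => s.sum id = b).card :=
    Finset.card_eq_sum_card_fiberwise (fun s _ => Finset.mem_univ _)
  rw [Finset.card_powersetCard, Finset.card_univ] at hpart
  rw [hpart, Finset.sum_congr rfl fun b _ => hfiber b, Finset.sum_const, Finset.card_univ,
    smul_eq_mul]

private lemma nsub_two_eq_zero : (Az F 2).card = 0 := by
  rw [Finset.card_eq_zero, Finset.eq_empty_iff_forall_notMem]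
  intro S hS
  rw [mem_Az] at hS
  obtain ⟨a, b, hab, rfl⟩ := Finset.card_eq_two.mp hS.1
  have h := hS.2
  rw [Finset.sum_pair hab] at h
  simp only [id] at h
  exact hab (hhalf h)

private lemma recur (k : ℕ) (hk : 2 ≤ k) :
    k * (Az F k).card + (Fintype.card F - (k - 2)) * (Az F (k - 2)).card
      = (Fintype.card F).choose (k - 1) := by
  classical
  set P : Finset (Finset F) := (Finset.univ : Finset F).powersetCard (k - 1) with hP
  have hsplit : (P.filter fun T => ¬ T.sum id ∈ T).card
      + (P.filter fun T => T.sum id ∈ T).card = P.card := by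
    rw [add_comm]
    exact Finset.card_filter_add_card_filter_not _
  have h1 : k * (Az F k).card = ((Az F k).sigma fun S => (S : Finset F)).card := by
    rw [Finset.card_sigma,
      Finset.sum_congr rfl fun S hS => (mem_Az.mp hS).1,
      Finset.sum_const, smul_eq_mul, mul_comm]
  have h2 : ((Az F k).sigma fun S => (S : Finset F)).card
      = (P.filter fun T => ¬ T.sum id ∈ T).card := by
    refine Finset.card_nbij' (fun p => p.1.erase p.2)
      (fun T => ⟨insert (T.sum id) T, T.sum id⟩) ?_ ?_ ?_ ?_
    · rintro ⟨S, x⟩ hp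
      simp only [Finset.mem_coe, Finset.mem_sigma] at hp
      obtain ⟨hS, hx⟩ := hp
      rw [mem_Az] at hS
      have hsum : (S.erase x).sum id = x := by
        apply hhalf
        have h' := Finset.sum_erase_add S id hx
        rw [hS.2] at h'
        exact h'
      simp only [Finset.mem_coe, Finset.mem_filter, hP, Finset.mem_powersetCard_univ]
      refine ⟨?_, ?_⟩
      · rw [Finset.card_erase_of_mem hx, hS.1]
      · rw [hsum]; exact Finset.notMem_erase x S
    · intro T hT
      rw [Finset.mem_coe, Finset.mem_filter, hP, Finset.mem_powersetCard_univ] at hT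
      obtain ⟨hc, hs⟩ := hT
      rw [Finset.mem_coe, Finset.mem_sigma, mem_Az]
      refine ⟨⟨?_, ?_⟩, Finset.mem_insert_self _ _⟩
      · rw [Finset.card_insert_of_notMem hs, hc]; omega
      · rw [Finset.sum_insert hs]
        exact CharTwo.add_self_eq_zero _
    · rintro ⟨S, x⟩ hp
      simp only [Finset.mem_coe, Finset.mem_sigma] at hp
      obtain ⟨hS, hx⟩ := hp
      rw [mem_Az] at hS
      have hsum : (S.erase x).sum id = x := by
        apply hhalf
        have h' := Finset.sum_erase_add S id hx
        rw [hS.2] at h'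
        exact h'
      simp only [hsum]
      congr 1
      exact Finset.insert_erase hx
    · intro T hT
      rw [Finset.mem_coe, Finset.mem_filter] at hT
      exact Finset.erase_insert hT.2
  have h3 : (Fintype.card F - (k - 2)) * (Az F (k - 2)).card
      = ((Az F (k - 2)).sigma fun U => Finset.univ \ U).card := by
    rw [Finset.card_sigma]
    rw [Finset.sum_congr rfl fun U hU => by
      rw [Finset.card_sdiff_of_subset (Finset.subset_univ U), Finset.card_univ, (mem_Az.mp hU).1]]
    rw [Finset.sum_const, smul_eq_mul, mul_comm]
  have h4 : ((Az F (k - 2)).sigma fun U => Finset.univ \ U).card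
      = (P.filter fun T => T.sum id ∈ T).card := by
    refine Finset.card_nbij' (fun p => insert p.2 p.1)
      (fun T => ⟨T.erase (T.sum id), T.sum id⟩) ?_ ?_ ?_ ?_
    · rintro ⟨U, y⟩ hp
      simp only [Finset.mem_coe, Finset.mem_sigma] at hp
      obtain ⟨hU, hy⟩ := hp
      rw [mem_Az] at hU
      rw [Finset.mem_sdiff] at hy
      have hyU : y ∉ U := hy.2
      have hsum : (insert y U).sum id = y := by
        rw [Finset.sum_insert hyU]
        show y + U.sum id = y
        rw [hU.2, add_zero]
      simp only [Finset.mem_coe, Finset.mem_filter, hP, Finset.mem_powersetCard_univ]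
      refine ⟨?_, ?_⟩
      · rw [Finset.card_insert_of_notMem hyU, hU.1]; omega
      · rw [hsum]; exact Finset.mem_insert_self _ _
    · intro T hT
      rw [Finset.mem_coe, Finset.mem_filter, hP, Finset.mem_powersetCard_univ] at hT
      obtain ⟨hc, hs⟩ := hT
      rw [Finset.mem_coe, Finset.mem_sigma, mem_Az]
      refine ⟨⟨?_, ?_⟩, ?_⟩
      · rw [Finset.card_erase_of_mem hs, hc]; omega
      · have h0 : (T.erase (T.sum id)).sum id + T.sum id = T.sum id :=
          Finset.sum_erase_add T id hs
        exact add_right_cancel (a := (T.erase (T.sum id)).sum id) (b := T.sum id)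
          (by rw [h0, zero_add])
      · rw [Finset.mem_sdiff]
        exact ⟨Finset.mem_univ _, Finset.notMem_erase _ _⟩
    · rintro ⟨U, y⟩ hp
      simp only [Finset.mem_coe, Finset.mem_sigma] at hp
      obtain ⟨hU, hy⟩ := hp
      rw [mem_Az] at hU
      rw [Finset.mem_sdiff] at hy
      have hyU : y ∉ U := hy.2
      have hsum : (insert y U).sum id = y := by
        rw [Finset.sum_insert hyU]
        show y + U.sum id = y
        rw [hU.2, add_zero]
      simp only [hsum]
      congr 1
      exact Finset.erase_insert hyU
    · intro T hT
      rw [Finset.mem_coe, Finset.mem_filter] at hT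
      exact Finset.insert_erase hT.2
  rw [h1, h2, h3, h4, hsplit, hP, Finset.card_powersetCard, Finset.card_univ]

private lemma even_formula (q : ℕ) (hq : Fintype.card F = q) :
    ∀ ℓ : ℕ, 2 ≤ ℓ → 2 * ℓ ≤ q →
      (((Az F (2 * ℓ)).card : ℕ) : ℚ) =
        (1 / (2 * (ℓ : ℚ))) *
          ∑ t ∈ Finset.range (ℓ - 1), (-1 : ℚ) ^ t *
            (∏ j ∈ Finset.range t,
              ((q : ℚ) - 2 * ((ℓ : ℚ) - 1 - (j : ℚ))) / (2 * ((ℓ : ℚ) - 1 - (j : ℚ)))) *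
            ((q).choose (2 * ℓ - 1 - 2 * t) : ℚ) := by
  intro ℓ hℓ
  induction ℓ, hℓ using Nat.le_induction with
  | base =>
    intro hle
    have hrec := recur (F := F) 4 (by omega)
    rw [hq] at hrec
    norm_num [nsub_two_eq_zero] at hrec
    have h4 : (4 : ℚ) * ((Az F 4).card : ℚ) = (q.choose 3 : ℚ) := by exact_mod_cast hrec
    norm_num [Finset.sum_range_one]
    linarith
  | succ ℓ hℓ IH =>
    intro hle
    have hIH := IH (by omega)
    have hrec := recur (F := F) (2 * (ℓ + 1)) (by omega)
    rw [hq] at hrec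
    rw [show 2 * (ℓ + 1) - 2 = 2 * ℓ from by omega,
        show 2 * (ℓ + 1) - 1 = 2 * ℓ + 1 from by omega] at hrec
    have hcast : ((2 * (ℓ + 1) : ℕ) : ℚ) * ((Az F (2 * (ℓ + 1))).card : ℚ)
        + ((q : ℚ) - 2 * ℓ) * ((Az F (2 * ℓ)).card : ℚ) = (q.choose (2 * ℓ + 1) : ℚ) := by
      have h2 : ((q - 2 * ℓ : ℕ) : ℚ) = (q : ℚ) - 2 * ℓ := by
        push_cast [Nat.cast_sub (by omega : 2 * ℓ ≤ q)]; ring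
      exact_mod_cast h2 ▸ (by exact_mod_cast congrArg (fun n : ℕ => (n : ℚ)) hrec :
        ((2 * (ℓ + 1) : ℕ) : ℚ) * ((Az F (2 * (ℓ + 1))).card : ℚ)
          + ((q - 2 * ℓ : ℕ) : ℚ) * ((Az F (2 * ℓ)).card : ℚ) = (q.choose (2 * ℓ + 1) : ℚ))
    set S : ℚ := ∑ t ∈ Finset.range (ℓ - 1), (-1 : ℚ) ^ t *
        (∏ j ∈ Finset.range t,
          ((q : ℚ) - 2 * ((ℓ : ℚ) - 1 - (j : ℚ))) / (2 * ((ℓ : ℚ) - 1 - (j : ℚ)))) *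
        ((q).choose (2 * ℓ - 1 - 2 * t) : ℚ) with hS
    have hsum : (∑ t ∈ Finset.range ((ℓ + 1) - 1), (-1 : ℚ) ^ t *
        (∏ j ∈ Finset.range t,
          ((q : ℚ) - 2 * (((ℓ + 1 : ℕ) : ℚ) - 1 - (j : ℚ))) / (2 * (((ℓ + 1 : ℕ) : ℚ) - 1 - (j : ℚ)))) *
        ((q).choose (2 * (ℓ + 1) - 1 - 2 * t) : ℚ))
        = (q.choose (2 * ℓ + 1) : ℚ) - ((q : ℚ) - 2 * ℓ) / (2 * ℓ) * S := by
      rw [show (ℓ + 1) - 1 = (ℓ - 1) + 1 from by omega, Finset.sum_range_succ']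
      have h0 : (-1 : ℚ) ^ 0 *
          (∏ j ∈ Finset.range 0,
            ((q : ℚ) - 2 * (((ℓ + 1 : ℕ) : ℚ) - 1 - (j : ℚ))) / (2 * (((ℓ + 1 : ℕ) : ℚ) - 1 - (j : ℚ)))) *
          ((q).choose (2 * (ℓ + 1) - 1 - 2 * 0) : ℚ) = (q.choose (2 * ℓ + 1) : ℚ) := by
        rw [show 2 * (ℓ + 1) - 1 - 2 * 0 = 2 * ℓ + 1 from by omega]
        simp
      rw [h0]
      have hterm : ∀ t ∈ Finset.range (ℓ - 1), (-1 : ℚ) ^ (t + 1) *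
          (∏ j ∈ Finset.range (t + 1),
            ((q : ℚ) - 2 * (((ℓ + 1 : ℕ) : ℚ) - 1 - (j : ℚ))) / (2 * (((ℓ + 1 : ℕ) : ℚ) - 1 - (j : ℚ)))) *
          ((q).choose (2 * (ℓ + 1) - 1 - 2 * (t + 1)) : ℚ)
          = -(((q : ℚ) - 2 * ℓ) / (2 * ℓ)) * ((-1 : ℚ) ^ t *
            (∏ j ∈ Finset.range t,
              ((q : ℚ) - 2 * ((ℓ : ℚ) - 1 - (j : ℚ))) / (2 * ((ℓ : ℚ) - 1 - (j : ℚ)))) *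
            ((q).choose (2 * ℓ - 1 - 2 * t) : ℚ)) := by
        intro t ht
        rw [Finset.mem_range] at ht
        rw [show 2 * (ℓ + 1) - 1 - 2 * (t + 1) = 2 * ℓ - 1 - 2 * t from by omega]
        rw [Finset.prod_range_succ']
        have hp : ∀ j, ((q : ℚ) - 2 * (((ℓ + 1 : ℕ) : ℚ) - 1 - ((j + 1 : ℕ) : ℚ)))
            / (2 * (((ℓ + 1 : ℕ) : ℚ) - 1 - ((j + 1 : ℕ) : ℚ)))
            = ((q : ℚ) - 2 * ((ℓ : ℚ) - 1 - (j : ℚ))) / (2 * ((ℓ : ℚ) - 1 - (j : ℚ))) := by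
          intro j
          push_cast
          ring_nf
        simp only [hp]
        have h00 : ((q : ℚ) - 2 * (((ℓ + 1 : ℕ) : ℚ) - 1 - ((0 : ℕ) : ℚ)))
            / (2 * (((ℓ + 1 : ℕ) : ℚ) - 1 - ((0 : ℕ) : ℚ)))
            = ((q : ℚ) - 2 * ℓ) / (2 * ℓ) := by
          push_cast
          ring_nf
        rw [h00, pow_succ]
        ring
      rw [Finset.sum_congr rfl hterm, ← Finset.mul_sum, ← hS]
      ring
    rw [hsum]
    have hℓpos : (0 : ℚ) < (ℓ : ℚ) := by exact_mod_cast (by omega : 0 < ℓ)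
    have hℓ0 : (2 * (ℓ : ℚ)) ≠ 0 := by linarith
    have hℓ1 : (2 * ((ℓ : ℚ) + 1)) ≠ 0 := by linarith
    push_cast at hcast
    rw [hIH] at hcast
    push_cast
    field_simp at hcast ⊢
    linarith [hcast]

end Aux

theorem stmt17 (m k : ℕ) (hm : 3 ≤ m) (hk : 3 ≤ k) (hk' : k < 2 ^ m - 1)
    (F : Type*) [Field F] [Fintype F] [DecidableEq F]
    (hcard : Fintype.card F = 2 ^ m) :
    (∀ ℓ : ℕ, 1 ≤ ℓ → k = 2 * ℓ + 1 →
        (Nsub k (Finset.univ : Finset F) : ℚ) =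
          (1 / (2 : ℚ) ^ m) * ((2 ^ m).choose (2 * ℓ + 1) : ℚ)) ∧
      ∀ ℓ : ℕ, 2 ≤ ℓ → k = 2 * ℓ →
        (Nsub k (Finset.univ : Finset F) : ℚ) =
          (1 / (2 * (ℓ : ℚ))) *
            ∑ t ∈ Finset.range (ℓ - 1), (-1 : ℚ) ^ t *
              (∏ j ∈ Finset.range t,
                ((2 : ℚ) ^ m - 2 * ((ℓ : ℚ) - 1 - (j : ℚ))) / (2 * ((ℓ : ℚ) - 1 - (j : ℚ)))) *
              ((2 ^ m).choose (2 * ℓ - 1 - 2 * t) : ℚ) := by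
  haveI hchar2 : CharP F 2 := by
    have hchar := ringChar.charP F
    obtain ⟨n, hp, hc⟩ := FiniteField.card F (ringChar F)
    rw [hcard] at hc
    have hdvd : ringChar F ∣ 2 := by
      refine hp.dvd_of_dvd_pow (n := m) ?_
      rw [hc]
      exact dvd_pow_self _ (by exact_mod_cast n.ne_zero)
    have h2 : ringChar F = 2 := (Nat.prime_dvd_prime_iff_eq hp Nat.prime_two).mp hdvd
    rwa [h2] at hchar
  have hqm : ((2 ^ m : ℕ) : ℚ) = (2 : ℚ) ^ m := by push_cast; ring
  constructor
  · intro ℓ hℓ hkeq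
    have hodd := odd_count (F := F) k ⟨ℓ, by omega⟩
    rw [hcard] at hodd
    rw [nsub_eq]
    have hQ : ((2 ^ m : ℕ) : ℚ) * ((Az F k).card : ℚ) = ((2 ^ m).choose k : ℚ) := by
      exact_mod_cast hodd
    have h2 : ((2 : ℚ)) ^ m ≠ 0 := by positivity
    rw [hqm] at hQ
    rw [← hkeq]
    field_simp
    linarith
  · intro ℓ hℓ hkeq
    subst hkeq
    rw [nsub_eq]
    have h := even_formula (F := F) (2 ^ m) hcard ℓ hℓ (by omega)
    rw [hqm] at h
    exact h
end

section
/- Let m ≥ 3. (i) For any integer k with 3 ≤ k ≤ 2^m−4, the integer (2^m−1)(2^m−2) divides k(k−1)·N(k, 0, F_{2^m}^*) (equivalently, the rational number (2^m−1)(2^m−2)/(k(k−1)) divides N(k, 0, F_{2^m}^*)). (ii) For any even integer k with 4 ≤ k ≤ 2^m−4, the integer 2^m(2^m−1)(2^m−2) divides k(k−1)(k−2)·N(k, 0, F_{2^m}) (equivalently, 2^m(2^m−1)(2^m−2)/(k(k−1)(k−2)) divides N(k, 0, F_{2^m})). -/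
open Finset

-- existence of an additive automorphism sending one independent pair to another
lemma exists_addEquiv (F : Type*) [Field F] [Fintype F] [DecidableEq F] [CharP F 2]
    {a b a' b' : F} (ha : a ≠ 0) (hb : b ≠ 0) (hab : a ≠ b)
    (ha' : a' ≠ 0) (hb' : b' ≠ 0) (hab' : a' ≠ b') :
    ∃ e : F ≃+ F, e a = a' ∧ e b = b' := by
  haveI : Fact (Nat.Prime 2) := ⟨Nat.prime_two⟩
  letI : Algebra (ZMod 2) F := ZMod.algebra _ _
  have hzm : ∀ c : ZMod 2, c = 0 ∨ c = 1 := fun c => by fin_cases c; exacts [Or.inl rfl, Or.inr rfl]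
  have key : ∀ x y : F, x ≠ 0 → y ≠ 0 → x ≠ y →
      LinearIndependent (ZMod 2) ((↑) : ({x, y} : Set F) → F) := by
    intro x y hx hy hxy
    show LinearIndepOn (ZMod 2) id ({x, y} : Set F)
    refine (linearIndepOn_pair_iff id hxy hx).mpr ?_
    intro c
    rcases hzm c with rfl | rfl
    · simpa [eq_comm] using hy
    · simpa using hxy
  have h1 : LinearIndepOn (ZMod 2) id ({a, b} : Set F) := key a b ha hb hab
  have h2 : LinearIndepOn (ZMod 2) id ({a', b'} : Set F) := key a' b' ha' hb' hab'
  haveI : Fintype (h1.extend (Set.subset_univ _)) := Fintype.ofFinite _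
  haveI : Fintype (h2.extend (Set.subset_univ _)) := Fintype.ofFinite _
  have hcard : Fintype.card (h1.extend (Set.subset_univ _)) =
      Fintype.card (h2.extend (Set.subset_univ _)) := by
    rw [← Module.finrank_eq_card_basis (Module.Basis.extend h1),
      ← Module.finrank_eq_card_basis (Module.Basis.extend h2)]
  have maA : a ∈ h1.extend (Set.subset_univ _) := h1.subset_extend _ (by simp)
  have maB : b ∈ h1.extend (Set.subset_univ _) := h1.subset_extend _ (by simp)
  have maA' : a' ∈ h2.extend (Set.subset_univ _) := h2.subset_extend _ (by simp)
  have maB' : b' ∈ h2.extend (Set.subset_univ _) := h2.subset_extend _ (by simp)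
  classical
  let A1 : h1.extend (Set.subset_univ _) := ⟨a, maA⟩
  let B1 : h1.extend (Set.subset_univ _) := ⟨b, maB⟩
  let A2 : h2.extend (Set.subset_univ _) := ⟨a', maA'⟩
  let B2 : h2.extend (Set.subset_univ _) := ⟨b', maB'⟩
  let φ := Fintype.equivOfCardEq hcard
  let ψ := φ.trans (Equiv.swap (φ A1) A2)
  have hψA : ψ A1 = A2 := by simp [ψ]
  let χ := ψ.trans (Equiv.swap (ψ B1) B2)
  have hAB1 : A1 ≠ B1 := by simp [A1, B1, Subtype.ext_iff]; exact hab
  have hχB : χ B1 = B2 := by simp [χ]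
  have hχA : χ A1 = A2 := by
    have h1' : ψ A1 ≠ ψ B1 := fun h => hAB1 (ψ.injective h)
    have h2' : A2 ≠ B2 := by simp [A2, B2, Subtype.ext_iff]; exact hab'
    simp only [χ, Equiv.trans_apply, hψA]
    rw [Equiv.swap_apply_of_ne_of_ne (hψA ▸ h1'.symm).symm h2']
  refine ⟨((Module.Basis.extend h1).equiv (Module.Basis.extend h2) χ).toAddEquiv, ?_, ?_⟩
  · have := (Module.Basis.extend h1).equiv_apply (e := χ) A1 (Module.Basis.extend h2)
    simp only [Module.Basis.extend_apply_self, hχA] at this ⊢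
    simpa [A1, A2] using this
  · have := (Module.Basis.extend h1).equiv_apply (e := χ) B1 (Module.Basis.extend h2)
    simp only [Module.Basis.extend_apply_self, hχB] at this ⊢
    simpa [B1, B2] using this

section Counting

variable {F : Type*} [DecidableEq F]

lemma nat_mul_pred (c : ℕ) : c * c - c = c * (c - 1) := by
  cases c with
  | zero => simp
  | succ n => simp [Nat.mul_succ, Nat.succ_sub_one]

/-- ordered distinct triples from a finset -/
def Tri (s : Finset F) : Finset (F × F × F) :=
  s.biUnion fun a => ((s.erase a).offDiag).image fun p => (a, p.1, p.2)

lemma mem_Tri {s : Finset F} {t : F × F × F} :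
    t ∈ Tri s ↔ (t.1 ∈ s ∧ t.2.1 ∈ s ∧ t.2.2 ∈ s) ∧
      t.1 ≠ t.2.1 ∧ t.1 ≠ t.2.2 ∧ t.2.1 ≠ t.2.2 := by
  obtain ⟨a, b, c⟩ := t
  simp only [Tri, mem_biUnion, mem_image, mem_offDiag, mem_erase, Prod.mk.injEq]
  constructor
  · rintro ⟨x, hx, ⟨p, q⟩, ⟨⟨hp1, hp2⟩, ⟨hq1, hq2⟩, hpq⟩, rfl, rfl, rfl⟩
    exact ⟨⟨hx, hp2, hq2⟩, Ne.symm hp1, Ne.symm hq1, hpq⟩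
  · rintro ⟨⟨h1, h2, h3⟩, h4, h5, h6⟩
    exact ⟨a, h1, ⟨b, c⟩, ⟨⟨Ne.symm h4, h2⟩, ⟨Ne.symm h5, h3⟩, h6⟩, rfl, rfl, rfl⟩

lemma card_Tri (s : Finset F) :
    (Tri s).card = s.card * ((s.card - 1) * (s.card - 2)) := by
  rw [Tri, card_biUnion]
  · have h : ∀ a ∈ s,
        (((s.erase a).offDiag).image fun p => (a, p.1, p.2)).card
          = (s.card - 1) * (s.card - 2) := by
      intro a ha
      rw [Finset.card_image_of_injective _
        (fun p q h => by simpa [Prod.ext_iff] using h)]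
      rw [offDiag_card, card_erase_of_mem ha, nat_mul_pred]
      have : s.card - 1 - 1 = s.card - 2 := by omega
      rw [this]
    rw [Finset.sum_congr rfl h, sum_const, smul_eq_mul]
  · intro a ha b hb hab
    simp only [Finset.disjoint_left, mem_image]
    rintro t ⟨p, hp, rfl⟩ ⟨q, hq, ht⟩
    simp only [Prod.ext_iff] at ht
    exact hab ht.1.symm

lemma exchange {ι : Type*} [DecidableEq ι] (Z : Finset (Finset F)) (A : Finset ι)
    (P : ι → Finset F → Prop) [∀ i s, Decidable (P i s)] :
    ∑ i ∈ A, (Z.filter fun s => P i s).card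
      = ∑ s ∈ Z, (A.filter fun i => P i s).card := by
  simp only [Finset.card_filter]
  exact Finset.sum_comm

variable [AddCommMonoid F]

lemma map_le (k : ℕ) (D : Finset F) (σ : F ≃ F) (hD : ∀ x ∈ D, σ x ∈ D)
    (hsum : ∀ s : Finset F, s ⊆ D → s.card = k → s.sum id = 0 → (s.image σ).sum id = 0)
    (P Q : Finset F → Prop) [DecidablePred P] [DecidablePred Q]
    (hPQ : ∀ s : Finset F, P s → Q (s.image σ)) :
    (((D.powersetCard k).filter fun s => s.sum id = 0).filter P).card ≤
      (((D.powersetCard k).filter fun s => s.sum id = 0).filter Q).card := by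
  apply Finset.card_le_card_of_injOn (fun s => s.image σ)
  · intro s hs
    simp only [mem_coe, mem_filter, mem_powersetCard] at hs ⊢
    obtain ⟨⟨⟨hsub, hcard⟩, hsum0⟩, hP⟩ := hs
    refine ⟨⟨⟨?_, ?_⟩, ?_⟩, ?_⟩
    · intro x hx
      simp only [mem_image] at hx
      obtain ⟨y, hy, rfl⟩ := hx
      exact hD y (hsub hy)
    · rw [Finset.card_image_of_injective _ σ.injective]; exact hcard
    · exact hsum s hsub hcard hsum0
    · exact hPQ s hP
  · exact (Finset.image_injective σ.injective).injOn

end Counting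

theorem stmt18 (m : ℕ) (hm : 3 ≤ m)
    (F : Type*) [Field F] [Fintype F] [DecidableEq F]
    (hcard : Fintype.card F = 2 ^ m) :
    (∀ k : ℕ, 3 ≤ k → k ≤ 2 ^ m - 4 →
        (2 ^ m - 1) * (2 ^ m - 2) ∣ k * (k - 1) * Nsub k ({0}ᶜ : Finset F)) ∧
      ∀ k : ℕ, Even k → 4 ≤ k → k ≤ 2 ^ m - 4 →
        2 ^ m * (2 ^ m - 1) * (2 ^ m - 2) ∣
          k * (k - 1) * (k - 2) * Nsub k (Finset.univ : Finset F) := by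
  classical
  have hq8 : 8 ≤ 2 ^ m := by
    calc (8 : ℕ) = 2 ^ 3 := by norm_num
    _ ≤ 2 ^ m := Nat.pow_le_pow_right (by norm_num) hm
  haveI hchar2 : CharP F 2 := by
    obtain ⟨p, hp⟩ := CharP.exists F
    haveI := hp
    obtain ⟨n, hprime, hn⟩ := FiniteField.card F p
    have hpd : p ∣ 2 ^ m := by
      rw [← hcard, hn]
      exact dvd_pow_self p n.pos.ne'
    have hp2 : p = 2 :=
      (Nat.prime_dvd_prime_iff_eq hprime Nat.prime_two).mp (hprime.dvd_of_dvd_pow hpd)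
    subst hp2
    exact hp
  constructor
  · -- part (i)
    intro k _ _
    set q := 2 ^ m with hq
    set D : Finset F := ({0}ᶜ : Finset F) with hD
    set Z := (D.powersetCard k).filter fun s => s.sum id = 0 with hZdef
    set M : F × F → ℕ := fun p => (Z.filter fun s => p.1 ∈ s ∧ p.2 ∈ s).card with hM
    have hDmem : ∀ x : F, x ∈ D ↔ x ≠ 0 := by intro x; simp [hD]
    have hoffmem : ∀ p : F × F, p ∈ D.offDiag ↔ p.1 ≠ 0 ∧ p.2 ≠ 0 ∧ p.1 ≠ p.2 := by
      intro p
      simp only [mem_offDiag, hDmem]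
    have hconstle : ∀ p ∈ D.offDiag, ∀ p' ∈ D.offDiag, M p ≤ M p' := by
      intro p hp p' hp'
      rw [hoffmem] at hp hp'
      obtain ⟨e, he1, he2⟩ := exists_addEquiv F hp.1 hp.2.1 hp.2.2 hp'.1 hp'.2.1 hp'.2.2
      refine map_le k D e.toEquiv ?_ ?_ _ _ ?_
      · intro x hx
        rw [hDmem] at hx ⊢
        intro h
        apply hx
        apply e.injective
        simpa using h
      · intro s hsub hcards h0
        have h1 : (Finset.image (⇑e.toEquiv) s).sum id = e (s.sum id) := by
          rw [Finset.sum_image (fun x _ y _ h => e.toEquiv.injective h)]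
          simp only [id_eq]
          exact (map_sum e (fun x => x) s).symm
        rw [h1, h0, map_zero]
      · rintro s ⟨h1, h2⟩
        constructor
        · have := mem_image_of_mem (⇑e.toEquiv) h1
          rwa [show (⇑e.toEquiv) p.1 = p'.1 from he1] at this
        · have := mem_image_of_mem (⇑e.toEquiv) h2
          rwa [show (⇑e.toEquiv) p.2 = p'.2 from he2] at this
    have hsum1 : ∑ p ∈ D.offDiag, M p = Z.card * (k * (k - 1)) := by
      rw [hM, exchange Z D.offDiag fun p s => p.1 ∈ s ∧ p.2 ∈ s]
      have hper : ∀ s ∈ Z, (D.offDiag.filter fun p => p.1 ∈ s ∧ p.2 ∈ s).card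
          = k * (k - 1) := by
        intro s hs
        simp only [hZdef, mem_filter, mem_powersetCard] at hs
        obtain ⟨⟨hsub, hcards⟩, _⟩ := hs
        have hset : (D.offDiag.filter fun p => p.1 ∈ s ∧ p.2 ∈ s) = s.offDiag := by
          ext p
          simp only [mem_filter, mem_offDiag]
          constructor
          · rintro ⟨⟨_, _, hne⟩, h1, h2⟩; exact ⟨h1, h2, hne⟩
          · rintro ⟨h1, h2, hne⟩; exact ⟨⟨hsub h1, hsub h2, hne⟩, h1, h2⟩
        rw [hset, offDiag_card, hcards, nat_mul_pred]
      rw [Finset.sum_congr rfl hper, sum_const, smul_eq_mul]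
    have hDcard : D.card = q - 1 := by
      rw [hD, card_compl, card_singleton, hcard]
    have hoffcard : D.offDiag.card = (q - 1) * (q - 2) := by
      rw [offDiag_card, hDcard, nat_mul_pred]
      have : q - 1 - 1 = q - 2 := by omega
      rw [this]
    have hne : D.offDiag.Nonempty := by
      rw [← card_pos, hoffcard]
      exact Nat.mul_pos (by omega) (by omega)
    obtain ⟨p₀, hp₀⟩ := hne
    have hconst : ∀ p ∈ D.offDiag, M p = M p₀ := fun p hp =>
      le_antisymm (hconstle p hp p₀ hp₀) (hconstle p₀ hp₀ p hp)
    have hsum2 : ∑ p ∈ D.offDiag, M p = (q - 1) * (q - 2) * M p₀ := by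
      rw [Finset.sum_congr rfl hconst, sum_const, smul_eq_mul, hoffcard]
    refine ⟨M p₀, ?_⟩
    have hNsub : Nsub k ({0}ᶜ : Finset F) = Z.card := rfl
    rw [hNsub]
    calc k * (k - 1) * Z.card = Z.card * (k * (k - 1)) := by ring
    _ = (q - 1) * (q - 2) * M p₀ := by rw [← hsum1, hsum2]
  · -- part (ii)
    intro k hk _ _
    set q := 2 ^ m with hq
    set Z := ((univ : Finset F).powersetCard k).filter fun s => s.sum id = 0 with hZdef
    set M : F × F × F → ℕ :=
      fun t => (Z.filter fun s => t.1 ∈ s ∧ t.2.1 ∈ s ∧ t.2.2 ∈ s).card with hM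
    have hksmul : ∀ x : F, k • x = 0 := by
      obtain ⟨j, hj⟩ := hk
      intro x
      rw [hj, add_nsmul]
      exact CharTwo.add_self_eq_zero _
    have hadd0 : ∀ x y : F, x ≠ y → x + y ≠ 0 := by
      intro x y hxy h
      exact hxy ((eq_neg_of_add_eq_zero_left h).trans (CharTwo.neg_eq y))
    have hconstle : ∀ t ∈ Tri (univ : Finset F), ∀ t' ∈ Tri (univ : Finset F),
        M t ≤ M t' := by
      intro t ht t' ht'
      rw [mem_Tri] at ht ht'
      obtain ⟨-, hab, hac, hbc⟩ := ht
      obtain ⟨-, hab', hac', hbc'⟩ := ht'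
      obtain ⟨e, he1, he2⟩ := exists_addEquiv F
        (hadd0 _ _ (Ne.symm hab)) (hadd0 _ _ (Ne.symm hac))
        (fun h => hbc (by exact add_right_cancel h))
        (hadd0 _ _ (Ne.symm hab')) (hadd0 _ _ (Ne.symm hac'))
        (fun h => hbc' (by exact add_right_cancel h))
      set σ : F ≃ F :=
        (Equiv.addRight t.1).trans (e.toEquiv.trans (Equiv.addRight t'.1)) with hσdef
      have hσ : ∀ x : F, σ x = e (x + t.1) + t'.1 := fun x => rfl
      have hσa : σ t.1 = t'.1 := by
        rw [hσ, CharTwo.add_self_eq_zero, map_zero, zero_add]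
      have hσb : σ t.2.1 = t'.2.1 := by
        rw [hσ, he1, add_assoc, CharTwo.add_self_eq_zero, add_zero]
      have hσc : σ t.2.2 = t'.2.2 := by
        rw [hσ, he2, add_assoc, CharTwo.add_self_eq_zero, add_zero]
      refine map_le k univ σ (fun x _ => mem_univ _) ?_ _ _ ?_
      · intro s hsub hcards h0
        rw [Finset.sum_image (fun x _ y _ h => σ.injective h)]
        simp only [id_eq, hσ]
        rw [Finset.sum_add_distrib, Finset.sum_const, hcards, hksmul, add_zero,
          ← map_sum, Finset.sum_add_distrib, Finset.sum_const, hcards, hksmul, add_zero]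
        simpa [id] using congrArg e h0
      · rintro s ⟨h1, h2, h3⟩
        exact ⟨hσa ▸ mem_image_of_mem σ h1, hσb ▸ mem_image_of_mem σ h2,
          hσc ▸ mem_image_of_mem σ h3⟩
    have hsum1 : ∑ t ∈ Tri (univ : Finset F), M t = Z.card * (k * ((k - 1) * (k - 2))) := by
      rw [hM, exchange Z (Tri (univ : Finset F)) fun t s => t.1 ∈ s ∧ t.2.1 ∈ s ∧ t.2.2 ∈ s]
      have hper : ∀ s ∈ Z,
          ((Tri (univ : Finset F)).filter fun t => t.1 ∈ s ∧ t.2.1 ∈ s ∧ t.2.2 ∈ s).card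
            = k * ((k - 1) * (k - 2)) := by
        intro s hs
        simp only [hZdef, mem_filter, mem_powersetCard] at hs
        obtain ⟨⟨hsub, hcards⟩, _⟩ := hs
        have hset : ((Tri (univ : Finset F)).filter
            fun t => t.1 ∈ s ∧ t.2.1 ∈ s ∧ t.2.2 ∈ s) = Tri s := by
          ext t
          simp only [mem_filter, mem_Tri, mem_univ, true_and]
          tauto
        rw [hset, card_Tri, hcards]
      rw [Finset.sum_congr rfl hper, sum_const, smul_eq_mul]
    have hTricard : (Tri (univ : Finset F)).card = q * ((q - 1) * (q - 2)) := by
      rw [card_Tri, card_univ, hcard]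
    have hne : (Tri (univ : Finset F)).Nonempty := by
      rw [← card_pos, hTricard]
      exact Nat.mul_pos (by omega) (Nat.mul_pos (by omega) (by omega))
    obtain ⟨t₀, ht₀⟩ := hne
    have hconst : ∀ t ∈ Tri (univ : Finset F), M t = M t₀ := fun t ht =>
      le_antisymm (hconstle t ht t₀ ht₀) (hconstle t₀ ht₀ t ht)
    have hsum2 : ∑ t ∈ Tri (univ : Finset F), M t = q * ((q - 1) * (q - 2)) * M t₀ := by
      rw [Finset.sum_congr rfl hconst, sum_const, smul_eq_mul, hTricard]
    refine ⟨M t₀, ?_⟩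
    have hNsub : Nsub k (univ : Finset F) = Z.card := rfl
    rw [hNsub]
    calc k * (k - 1) * (k - 2) * Z.card = Z.card * (k * ((k - 1) * (k - 2))) := by ring
    _ = q * (q - 1) * (q - 2) * M t₀ := by rw [← hsum1, hsum2]; ring
end

section
/- Let m ≥ 3 and let ℓ ≥ 1 be an integer with 2ℓ+1 ≤ 2^m−1. Then the following combinatorial identity holds: Σ_{t=0}^{ℓ−1} (−1)^t · ( Π_{j=0}^{t−1} (2^m − 2(ℓ−j))/(2(ℓ−j)) ) · binom(2^m, 2ℓ+1−2t) = binom(2^m−1, 2ℓ+1) + (−1)^{ℓ+1}·(2^m−1)·binom(2^{m−1}−1, ℓ), where the empty product (t = 0) is interpreted as 1. -/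
open Finset

private lemma choose_cast_eq (n k : ℕ) (h : k + 1 ≤ n) :
    ((n.choose (k+1)):ℚ) = (n.choose k : ℚ) * ((n:ℚ) - k) / (k+1) := by
  have hk : k ≤ n := Nat.le_of_succ_le h
  have hc := congrArg (fun x : ℕ => (x:ℚ)) (Nat.choose_succ_right_eq n k)
  push_cast [Nat.cast_sub hk] at hc
  have hk1 : ((k:ℚ) + 1) ≠ 0 := by positivity
  field_simp
  linarith [hc]

private lemma prodQ (M : ℕ) : ∀ l : ℕ, l ≤ M - 1 →
    ∏ i ∈ range l, (((M:ℚ)) - ((i:ℚ)+1))/((i:ℚ)+1) = ((M-1).choose l : ℚ) := by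
  intro l
  induction l with
  | zero => simp
  | succ n ih =>
    intro h
    have hn : n ≤ M - 1 := by omega
    have hM : 1 ≤ M := by omega
    rw [Finset.prod_range_succ, ih hn, choose_cast_eq (M-1) n (by omega)]
    have : (((M-1:ℕ)):ℚ) = (M:ℚ) - 1 := by
      push_cast [Nat.cast_sub hM]; ring
    rw [this]
    ring

private lemma aux (N l : ℕ) (h1 : 1 ≤ l) (h2 : 2*l + 2 ≤ N) :
    ∀ T, 1 ≤ T → T ≤ l →
    ∑ t ∈ range T, (-1:ℚ)^t * (∏ j ∈ range t,
        ((N:ℚ) - 2*((l:ℚ)-(j:ℚ)))/(2*((l:ℚ)-(j:ℚ)))) * ((N.choose (2*l+1-2*t)):ℚ)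
    = (((N-1).choose (2*l+1)):ℚ) + (-1:ℚ)^(T+1) * (∏ j ∈ range T,
        ((N:ℚ)-2*((l:ℚ)-(j:ℚ)))/(2*((l:ℚ)-(j:ℚ)))) * (((N-1).choose (2*l+1-2*T)):ℚ) := by
  have hN1 : 1 ≤ N := by omega
  intro T
  induction T with
  | zero => omega
  | succ T ih =>
    intro _ hTl
    rcases Nat.eq_zero_or_pos T with hT0 | hT1
    · subst hT0
      simp only [Finset.sum_range_one, Finset.prod_range_one, Finset.prod_range_zero,
        pow_zero, one_mul, mul_one, Nat.cast_zero, sub_zero, zero_add, pow_one]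
      have hpascal : (N.choose (2*l+1) : ℚ) =
          ((N-1).choose (2*l) : ℚ) + ((N-1).choose (2*l+1) : ℚ) := by
        have hN : N = (N-1) + 1 := by omega
        rw [hN, Nat.choose_succ_succ]
        push_cast; ring
      have hkey : (((N-1).choose (2*l)) : ℚ) =
          ((N-1).choose (2*l-1) : ℚ) * ((N:ℚ) - 2*l) / (2*l) := by
        have hcc := choose_cast_eq (N-1) (2*l-1) (by omega)
        rw [show 2*l-1+1 = 2*l from by omega] at hcc
        have c1 : (((N-1:ℕ)):ℚ) = (N:ℚ) - 1 := by push_cast [Nat.cast_sub hN1]; ring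
        have c2 : (((2*l-1:ℕ)):ℚ) = 2*(l:ℚ) - 1 := by
          push_cast [Nat.cast_sub (show 1 ≤ 2*l by omega)]; ring
        rw [hcc, c1, c2]
        ring
      have hi0 : 2*l+1-2*0 = 2*l+1 := by omega
      have hi1 : 2*l+1-2*1 = 2*l-1 := by omega
      rw [hi0, hi1, hpascal, hkey]
      ring
    · have hstep := ih hT1 (by omega)
      rw [Finset.sum_range_succ, hstep]
      set d : ℕ := l - T with hd
      have hd1 : 1 ≤ d := by omega
      have hcast : (l:ℚ) - (T:ℚ) = (d:ℚ) := by
        rw [hd, Nat.cast_sub (by omega : T ≤ l)]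
      have hi1 : 2*l+1-2*T = 2*d+1 := by omega
      have hi2 : 2*l+1-2*(T+1) = 2*d-1 := by omega
      rw [hi1, hi2, Finset.prod_range_succ, hcast]
      have hpascal : (N.choose (2*d+1) : ℚ) =
          ((N-1).choose (2*d) : ℚ) + ((N-1).choose (2*d+1) : ℚ) := by
        have hN : N = (N-1) + 1 := by omega
        rw [hN, Nat.choose_succ_succ]
        push_cast; ring
      have hkey : (((N-1).choose (2*d)) : ℚ) =
          ((N-1).choose (2*d-1) : ℚ) * ((N:ℚ) - 2*d) / (2*d) := by
        have hcc := choose_cast_eq (N-1) (2*d-1) (by omega)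
        rw [show 2*d-1+1 = 2*d from by omega] at hcc
        have c1 : (((N-1:ℕ)):ℚ) = (N:ℚ) - 1 := by push_cast [Nat.cast_sub hN1]; ring
        have c2 : (((2*d-1:ℕ)):ℚ) = 2*(d:ℚ) - 1 := by
          push_cast [Nat.cast_sub (show 1 ≤ 2*d by omega)]; ring
        rw [hcc, c1, c2]
        ring
      have h2d1 : ((N-1).choose (2*d+1) : ℚ) = ((N-1).choose (2*d+1) : ℚ) := rfl
      rw [hpascal, hkey]
      have hd0 : ((d:ℚ)) ≠ 0 := by
        simp only [ne_eq, Nat.cast_eq_zero]; omega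
      rw [pow_succ, pow_succ, pow_succ]
      ring

theorem stmt19 (m ℓ : ℕ) (hm : 3 ≤ m) (hℓ : 1 ≤ ℓ) (hle : 2 * ℓ + 1 ≤ 2 ^ m - 1) :
    ∑ t ∈ Finset.range ℓ, (-1 : ℚ) ^ t *
        (∏ j ∈ Finset.range t,
          ((2 : ℚ) ^ m - 2 * ((ℓ : ℚ) - (j : ℚ))) / (2 * ((ℓ : ℚ) - (j : ℚ)))) *
        ((2 ^ m).choose (2 * ℓ + 1 - 2 * t) : ℚ) =
      ((2 ^ m - 1).choose (2 * ℓ + 1) : ℚ) +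
        (-1 : ℚ) ^ (ℓ + 1) * ((2 : ℚ) ^ m - 1) * ((2 ^ (m - 1) - 1).choose ℓ : ℚ) := by
  set N : ℕ := 2 ^ m with hN
  set M : ℕ := 2 ^ (m - 1) with hM
  have hNM : N = 2 * M := by
    rw [hN, hM, ← pow_succ']
    congr 1
    omega
  have hM8 : 4 ≤ M := by
    have : 2 ^ 2 ≤ 2 ^ (m-1) := Nat.pow_le_pow_right (by norm_num) (by omega)
    omega
  have h2 : 2*ℓ + 2 ≤ N := by omega
  have hℓM : ℓ ≤ M - 1 := by omega
  have hcastN : ((2:ℚ))^m = ((N:ℕ):ℚ) := by rw [hN]; push_cast; ring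
  rw [hcastN]
  have := aux N ℓ hℓ h2 ℓ hℓ le_rfl
  rw [this]
  have hi : 2*ℓ+1-2*ℓ = 1 := by omega
  rw [hi]
  have hch1 : ((N-1).choose 1 : ℚ) = (N:ℚ) - 1 := by
    rw [Nat.choose_one_right]
    push_cast [Nat.cast_sub (show 1 ≤ N by omega)]
    ring
  have hprod : (∏ j ∈ range ℓ, ((N:ℚ)-2*((ℓ:ℚ)-(j:ℚ)))/(2*((ℓ:ℚ)-(j:ℚ))))
      = ((M-1).choose ℓ : ℚ) := by
    rw [← prodQ M ℓ hℓM]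
    rw [← Finset.prod_range_reflect (fun i => (((M:ℚ)) - ((i:ℚ)+1))/((i:ℚ)+1)) ℓ]
    apply Finset.prod_congr rfl
    intro j hj
    have hjl : j < ℓ := Finset.mem_range.mp hj
    have hc : ((ℓ - 1 - j : ℕ) : ℚ) + 1 = (ℓ:ℚ) - (j:ℚ) := by
      have : ℓ - 1 - j = ℓ - (j+1) := by omega
      rw [this, Nat.cast_sub (by omega : j+1 ≤ ℓ)]
      push_cast; ring
    rw [hc]
    have hx : (ℓ:ℚ) - (j:ℚ) ≠ 0 := by
      have : ((ℓ - j : ℕ) : ℚ) = (ℓ:ℚ) - (j:ℚ) := Nat.cast_sub (by omega)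
      rw [← this]
      simp only [ne_eq, Nat.cast_eq_zero]
      omega
    rw [hNM]
    push_cast
    rw [show (2*(M:ℚ) - 2*((ℓ:ℚ)-(j:ℚ))) = 2*((M:ℚ) - ((ℓ:ℚ)-(j:ℚ))) by ring,
      mul_div_mul_left _ _ (two_ne_zero)]
  rw [hprod, hch1]
  ring
end
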